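/- arXiv:1909.08121 — 5 statements merged into one kernel-verified Lean document; each statement's English description precedes it below -/
import Mathlib

section
/- For every λ ∈ (−1/2, 0) ∪ (0, ∞) and every integer n > 1, the Gegenbauer polynomials satisfy ‖C_{n−2}^{(λ+1)}‖₂² = ((n² − 2λn)/(2⁴λ³))·[C_n^{(λ)}(1)]² + ((n(2n+1))/(2³λ²))·‖C_n^{(λ)}‖₂² − Σ_{k=0}^{n−1} ((λ+k)/(2²λ²))·‖C_k^{(λ)}‖₂². -/
open Real MeasureTheory Finset

/-- Gegenbauer polynomials `C_n^{(λ)}`: `C_0 = 1`, `C_1 = 2λx`, and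
`n C_n(x) = 2(n+λ-1) x C_{n-1}(x) - (n+2λ-2) C_{n-2}(x)` for `n ≥ 2`. -/
noncomputable def gegenbauer (lam : ℝ) : ℕ → ℝ → ℝ
  | 0, _ => 1
  | 1, x => 2 * lam * x
  | n + 2, x =>
      (2 * ((n : ℝ) + 1 + lam) * x * gegenbauer lam (n + 1) x
        - ((n : ℝ) + 2 * lam) * gegenbauer lam n x) / ((n : ℝ) + 2)

lemma geg_zero (lam x : ℝ) : gegenbauer lam 0 x = 1 := rfl
lemma geg_one (lam x : ℝ) : gegenbauer lam 1 x = 2 * lam * x := rfl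
lemma geg_rec (lam : ℝ) (n : ℕ) (x : ℝ) : gegenbauer lam (n+2) x =
    (2 * ((n : ℝ) + 1 + lam) * x * gegenbauer lam (n + 1) x
        - ((n : ℝ) + 2 * lam) * gegenbauer lam n x) / ((n : ℝ) + 2) := rfl

lemma geg_rec' (lam : ℝ) (n : ℕ) (x : ℝ) :
    ((n : ℝ) + 2) * gegenbauer lam (n+2) x =
    2 * ((n : ℝ) + 1 + lam) * x * gegenbauer lam (n + 1) x
        - ((n : ℝ) + 2 * lam) * gegenbauer lam n x := by
  have h : ((n : ℝ) + 2) ≠ 0 := by positivity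
  rw [geg_rec]; field_simp


lemma geg_cont (lam : ℝ) : ∀ n, Continuous (gegenbauer lam n) := by
  intro n
  induction n using Nat.strong_induction_on with
  | _ n ih =>
    match n with
    | 0 => rw [show gegenbauer lam 0 = fun _ : ℝ => (1:ℝ) from rfl]; exact continuous_const
    | 1 => rw [show gegenbauer lam 1 = fun x : ℝ => 2*lam*x from rfl]; fun_prop
    | (k+2) =>
      have h1 := ih (k+1) (by omega)
      have h0 := ih k (by omega)
      rw [show gegenbauer lam (k+2) = fun x : ℝ =>
        (2 * ((k : ℝ) + 1 + lam) * x * gegenbauer lam (k + 1) x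
        - ((k : ℝ) + 2 * lam) * gegenbauer lam k x) / ((k : ℝ) + 2) from rfl]
      exact (((continuous_const.mul continuous_id).mul h1).sub (continuous_const.mul h0)).div_const _

lemma geg_two (lam x : ℝ) : gegenbauer lam 2 x = 2*lam*(1+lam)*x^2 - lam := by
  have h := geg_rec' lam 0 x
  norm_num [geg_one, geg_zero] at h
  linarith [h]

lemma geg_AB (lam x : ℝ) : ∀ n : ℕ,
    (((n:ℝ)+1+2*lam) * gegenbauer lam (n+1) x
       = 2*lam*(gegenbauer (lam+1) (n+1) x - x * gegenbauer (lam+1) n x))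
  ∧ (((n:ℝ)+2+2*lam) * gegenbauer lam (n+2) x
       = 2*lam*(gegenbauer (lam+1) (n+2) x - x * gegenbauer (lam+1) (n+1) x))
  ∧ (((n:ℝ)+2) * gegenbauer lam (n+2) x
       = 2*lam*(x * gegenbauer (lam+1) (n+1) x - gegenbauer (lam+1) n x)) := by
  intro n
  induction n with
  | zero =>
    refine ⟨?_, ?_, ?_⟩ <;>
      norm_num [geg_one, geg_zero, geg_two] <;> ring
  | succ n ih =>
    obtain ⟨hA1, hA2, hB2⟩ := ih
    have hC0 := geg_rec' lam (n+1) x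
    have hD0 := geg_rec' (lam+1) (n+1) x
    push_cast at hC0 hD0
    have hC : ((n:ℝ)+1+2) * gegenbauer lam (n+3) x
        = 2*((n:ℝ)+1+1+lam)*x*gegenbauer lam (n+2) x
          - ((n:ℝ)+1+2*lam)*gegenbauer lam (n+1) x := hC0
    have hD : ((n:ℝ)+1+2) * gegenbauer (lam+1) (n+3) x
        = 2*((n:ℝ)+1+1+(lam+1))*x*gegenbauer (lam+1) (n+2) x
          - ((n:ℝ)+1+2*(lam+1))*gegenbauer (lam+1) (n+1) x := hD0
    simp only [show n+1+1 = n+2 from rfl, show n+1+2 = n+3 from rfl]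
    push_cast
    have hB3 : ((n:ℝ)+3) * gegenbauer lam (n+3) x
        = 2*lam*(x * gegenbauer (lam+1) (n+2) x - gegenbauer (lam+1) (n+1) x) := by
      linear_combination hC + x*hA2 + x*hB2 - hA1
    have h3 : ((n:ℝ)+3) ≠ 0 := by positivity
    refine ⟨by linear_combination hA2, ?_, by linear_combination hB3⟩
    have key : ((n:ℝ)+3) * (((n:ℝ)+1+2+2*lam) * gegenbauer lam (n+3) x)
        = ((n:ℝ)+3) * (2*lam*(gegenbauer (lam+1) (n+3) x - x * gegenbauer (lam+1) (n+2) x)) := by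
      linear_combination ((n:ℝ)+3+2*lam)*hB3 - 2*lam*hD
    have h := mul_left_cancel₀ h3 key
    linear_combination h

lemma geg_val_one (lam : ℝ) : ∀ n : ℕ,
    ((n:ℝ)+1) * gegenbauer lam (n+1) 1 = ((n:ℝ)+2*lam) * gegenbauer lam n 1 := by
  intro n
  induction n with
  | zero => norm_num [geg_one, geg_zero]
  | succ n ih =>
    have hC0 := geg_rec' lam n 1
    push_cast at ih ⊢
    linear_combination hC0 + ih

lemma geg_hasDerivAt (lam x : ℝ) : ∀ n : ℕ,
    HasDerivAt (gegenbauer lam (n+1)) (2*lam*gegenbauer (lam+1) n x) x := by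
  have key : ∀ n : ℕ,
      HasDerivAt (gegenbauer lam (n+1)) (2*lam*gegenbauer (lam+1) n x) x ∧
      HasDerivAt (gegenbauer lam (n+2)) (2*lam*gegenbauer (lam+1) (n+1) x) x := by
    intro n
    induction n with
    | zero =>
      constructor
      · rw [show gegenbauer lam 1 = fun y : ℝ => 2*lam*y from rfl]
        simpa [geg_zero] using ((hasDerivAt_id x).const_mul (2*lam))
      · have hf : gegenbauer lam 2 = fun y : ℝ => 2*lam*(1+lam)*y^2 - lam := by
          funext y; exact geg_two lam y
        rw [hf]
        have h := ((hasDerivAt_pow 2 x).const_mul (2*lam*(1+lam))).sub_const lam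
        refine h.congr_deriv (Eq.symm ?_)
        simp [geg_one]; ring
    | succ n ih =>
      obtain ⟨h1, h2⟩ := ih
      refine ⟨h2, ?_⟩
      have hf : gegenbauer lam (n+3) = fun y : ℝ =>
          (2 * ((n:ℝ) + 2 + lam) * (y * gegenbauer lam (n + 2) y)
            - ((n:ℝ) + 1 + 2 * lam) * gegenbauer lam (n + 1) y) / ((n:ℝ) + 3) := by
        funext y
        have := geg_rec lam (n+1) y
        push_cast at this
        rw [show ((n:ℕ)+1+2) = n+3 from rfl] at this
        rw [this]; ring
      rw [hf]
      have hb := (((hasDerivAt_id x).mul h2).const_mul (2*((n:ℝ)+2+lam))).sub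
          (h1.const_mul ((n:ℝ)+1+2*lam)) |>.div_const ((n:ℝ)+3)
      refine hb.congr_deriv (Eq.symm ?_)
      -- value equality
      have hB2 := (geg_AB lam x n).2.2
      have hD0 := geg_rec' (lam+1) n x
      have h2ne : ((n:ℝ)+2) ≠ 0 := by positivity
      have h3ne : ((n:ℝ)+3) ≠ 0 := by positivity
      rw [eq_div_iff h3ne]
      simp only [id_eq]
      have key2 : ((n:ℝ)+2) * (2*lam*gegenbauer (lam+1) (n+2) x * ((n:ℝ)+3))
          = ((n:ℝ)+2) * ((2 * ((n:ℝ) + 2 + lam) * (1 * gegenbauer lam (n+2) x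
              + x * (2*lam*gegenbauer (lam+1) (n+1) x))
            - ((n:ℝ) + 1 + 2 * lam) * (2*lam*gegenbauer (lam+1) n x))) := by
        linear_combination 2*lam*((n:ℝ)+3)*hD0 - 2*((n:ℝ)+2+lam)*hB2
      have := mul_left_cancel₀ h2ne key2
      linear_combination this
  exact fun n => (key n).1

lemma ftc01 {f F : ℝ → ℝ} (hF : ∀ x, HasDerivAt F (f x) x) (hf : Continuous f) :
    ∫ x in (0:ℝ)..1, f x = F 1 - F 0 :=
  intervalIntegral.integral_eq_sub_of_hasDerivAt (fun x _ => hF x) (hf.intervalIntegrable 0 1)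

lemma int_geg0 (mu : ℝ) : ∫ x in (0:ℝ)..1, (gegenbauer mu 0 x)^2 = 1 := by
  simp [geg_zero]

lemma int_geg1 (mu : ℝ) : ∫ x in (0:ℝ)..1, (gegenbauer mu 1 x)^2 = 4*mu^2/3 := by
  have h : ∀ x:ℝ, HasDerivAt (fun y:ℝ => (4*mu^2/3)*y^3) ((gegenbauer mu 1 x)^2) x := by
    intro x
    have := (hasDerivAt_pow 3 x).const_mul (4*mu^2/3)
    refine this.congr_deriv (Eq.symm ?_)
    rw [geg_one]; push_cast; ring
  rw [ftc01 h ((geg_cont mu 1).pow 2)]; norm_num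

lemma int_geg2 (mu : ℝ) : ∫ x in (0:ℝ)..1, (gegenbauer mu 2 x)^2
    = 4*mu^2*(1+mu)^2/5 - 4*mu^2*(1+mu)/3 + mu^2 := by
  have h : ∀ x:ℝ, HasDerivAt
      (fun y:ℝ => (4*mu^2*(1+mu)^2/5)*y^5 - (4*mu^2*(1+mu)/3)*y^3 + mu^2*y)
      ((gegenbauer mu 2 x)^2) x := by
    intro x
    have := (((hasDerivAt_pow 5 x).const_mul (4*mu^2*(1+mu)^2/5)).sub
      ((hasDerivAt_pow 3 x).const_mul (4*mu^2*(1+mu)/3))).add ((hasDerivAt_id x).const_mul (mu^2))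
    refine this.congr_deriv (Eq.symm ?_)
    rw [geg_two]; push_cast; ring
  rw [ftc01 h ((geg_cont mu 2).pow 2)]; norm_num
set_option maxHeartbeats 2000000 in
theorem gegenbauer_L2_norm_recursion (lam : ℝ)
    (hlam : lam ∈ Set.Ioo (-(1/2) : ℝ) 0 ∪ Set.Ioi (0 : ℝ)) (n : ℕ) (hn : 1 < n) :
    (∫ x in (0:ℝ)..1, (gegenbauer (lam + 1) (n - 2) x) ^ 2) =
      (((n : ℝ) ^ 2 - 2 * lam * n) / (2 ^ 4 * lam ^ 3)) * (gegenbauer lam n 1) ^ 2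
      + (((n : ℝ) * (2 * n + 1)) / (2 ^ 3 * lam ^ 2))
          * (∫ x in (0:ℝ)..1, (gegenbauer lam n x) ^ 2)
      - ∑ k ∈ Finset.range n,
          ((lam + (k : ℝ)) / (2 ^ 2 * lam ^ 2)) * (∫ x in (0:ℝ)..1, (gegenbauer lam k x) ^ 2) := by
  have hl0 : lam ≠ 0 := by
    rcases hlam with h | h
    · exact ne_of_lt h.2
    · exact ne_of_gt h
  have hn2 : 2 ≤ n := hn
  clear hn
  induction n, hn2 using Nat.le_induction with
  | base =>
    rw [show (2:ℕ)-2 = 0 from rfl, int_geg0, int_geg2, geg_two,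
      Finset.sum_range_succ, Finset.sum_range_one, int_geg0, int_geg1]
    push_cast
    field_simp
    ring
  | succ n hn2 ih =>
    obtain ⟨m, rfl⟩ : ∃ m, n = m + 2 := ⟨n - 2, by omega⟩
    -- pointwise derivative identity
    have hG : ∀ x : ℝ, HasDerivAt (fun y : ℝ => -(((m:ℝ)+3)/2) * (y * (gegenbauer lam (m+3) y)^2)
          + (lam + 3*((m:ℝ)+2)/2) * (y * (gegenbauer lam (m+2) y)^2))
        (4*lam^2*(gegenbauer (lam+1) (m+1) x)^2 - 4*lam^2*(gegenbauer (lam+1) m x)^2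
          - (((m:ℝ)+3)*(2*((m:ℝ)+2)+3)/2)*(gegenbauer lam (m+3) x)^2
          + (((m:ℝ)+2)*(2*((m:ℝ)+2)+1)/2 + lam + ((m:ℝ)+2))*(gegenbauer lam (m+2) x)^2) x := by
      intro x
      have h3 : HasDerivAt (gegenbauer lam (m+3)) (2*lam*gegenbauer (lam+1) (m+2) x) x :=
        geg_hasDerivAt lam x (m+2)
      have h2 : HasDerivAt (gegenbauer lam (m+2)) (2*lam*gegenbauer (lam+1) (m+1) x) x :=
        geg_hasDerivAt lam x (m+1)
      have hb := (((hasDerivAt_id x).mul (h3.pow 2)).const_mul (-(((m:ℝ)+3)/2))).add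
                 (((hasDerivAt_id x).mul (h2.pow 2)).const_mul (lam + 3*((m:ℝ)+2)/2))
      refine hb.congr_deriv (Eq.symm ?_)
      simp only [id_eq, Pi.pow_apply, show (2:ℕ)-1 = 1 from rfl, pow_one, Nat.cast_ofNat]
      have hB3 := (geg_AB lam x (m+1)).2.2
      simp only [show m+1+2 = m+3 from rfl, show m+1+1 = m+2 from rfl] at hB3
      push_cast at hB3
      have hB2 := (geg_AB lam x m).2.2
      have hD := geg_rec' (lam+1) m x
      have h3ne : ((m:ℝ)+3) ≠ 0 := by positivity
      have h2ne : ((m:ℝ)+2) ≠ 0 := by positivity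
      have eC3 : gegenbauer lam (m+3) x
          = 2*lam*(x * gegenbauer (lam+1) (m+2) x - gegenbauer (lam+1) (m+1) x)/((m:ℝ)+3) := by
        rw [eq_div_iff h3ne]; linear_combination hB3
      have eC2 : gegenbauer lam (m+2) x
          = 2*lam*(x * gegenbauer (lam+1) (m+1) x - gegenbauer (lam+1) m x)/((m:ℝ)+2) := by
        rw [eq_div_iff h2ne]; linear_combination hB2
      have eD2 : gegenbauer (lam+1) (m+2) x
          = (2*((m:ℝ)+2+lam)*x*gegenbauer (lam+1) (m+1) x
              - ((m:ℝ)+2+2*lam)*gegenbauer (lam+1) m x)/((m:ℝ)+2) := by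
        rw [eq_div_iff h2ne]; linear_combination hD
      rw [eC3, eC2, eD2]
      field_simp
      ring
    have hTcont : Continuous (fun x : ℝ =>
        4*lam^2*(gegenbauer (lam+1) (m+1) x)^2 - 4*lam^2*(gegenbauer (lam+1) m x)^2
          - (((m:ℝ)+3)*(2*((m:ℝ)+2)+3)/2)*(gegenbauer lam (m+3) x)^2
          + (((m:ℝ)+2)*(2*((m:ℝ)+2)+1)/2 + lam + ((m:ℝ)+2))*(gegenbauer lam (m+2) x)^2) :=
      (((continuous_const.mul ((geg_cont _ _).pow 2)).sub
          (continuous_const.mul ((geg_cont _ _).pow 2))).sub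
        (continuous_const.mul ((geg_cont _ _).pow 2))).add
        (continuous_const.mul ((geg_cont _ _).pow 2))
    have hftc := ftc01 hG hTcont
    have i1 : IntervalIntegrable (fun x : ℝ => 4*lam^2*(gegenbauer (lam+1) (m+1) x)^2)
        MeasureTheory.volume 0 1 :=
      ((continuous_const.mul ((geg_cont _ _).pow 2))).intervalIntegrable 0 1
    have i2 : IntervalIntegrable (fun x : ℝ => 4*lam^2*(gegenbauer (lam+1) m x)^2)
        MeasureTheory.volume 0 1 :=
      ((continuous_const.mul ((geg_cont _ _).pow 2))).intervalIntegrable 0 1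
    have i3 : IntervalIntegrable (fun x : ℝ =>
        (((m:ℝ)+3)*(2*((m:ℝ)+2)+3)/2)*(gegenbauer lam (m+3) x)^2) MeasureTheory.volume 0 1 :=
      ((continuous_const.mul ((geg_cont _ _).pow 2))).intervalIntegrable 0 1
    have i4 : IntervalIntegrable (fun x : ℝ =>
        (((m:ℝ)+2)*(2*((m:ℝ)+2)+1)/2 + lam + ((m:ℝ)+2))*(gegenbauer lam (m+2) x)^2)
        MeasureTheory.volume 0 1 :=
      ((continuous_const.mul ((geg_cont _ _).pow 2))).intervalIntegrable 0 1
    rw [intervalIntegral.integral_add ((i1.sub i2).sub i3) i4,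
        intervalIntegral.integral_sub (i1.sub i2) i3,
        intervalIntegral.integral_sub i1 i2,
        intervalIntegral.integral_const_mul, intervalIntegral.integral_const_mul,
        intervalIntegral.integral_const_mul, intervalIntegral.integral_const_mul] at hftc
    norm_num at hftc
    -- boundary value relation
    have hval := geg_val_one lam (m+2)
    simp only [show m+2+1 = m+3 from rfl] at hval
    push_cast at hval
    -- assemble
    simp only [show m+2+1 = m+3 from rfl, show m+3-2 = m+1 from rfl,
      show m+2-2 = m from rfl] at ih ⊢
    rw [Finset.sum_range_succ]
    push_cast at ih ⊢
    linear_combination (norm := (field_simp; ring)) ih + (1/(4*lam^2))*hftc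
      - (1/(16*lam^3))*((((m:ℝ)+3))*(gegenbauer lam (m+3) 1)
          + (((m:ℝ)+2)+2*lam)*(gegenbauer lam (m+2) 1))*hval
end

section
/- For every integer n ≥ 2, ∫₀¹ (1−x²)·[C_{n−2}^{(2)}(x)]² dx = (1/16)(2n²−1)·(ψ(n+1/2) + γ + log 4) − n²/8, where ψ is the digamma function and γ is the Euler–Mascheroni constant. -/
open Real MeasureTheory Finset

/-- The digamma function `ψ = Γ′/Γ`. -/
noncomputable def digamma (x : ℝ) : ℝ := deriv Real.Gamma x / Real.Gamma x

namespace GegAux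

/-- Auxiliary closed form: `G r θ = s³ · Σ_{j<r} (2j²+2j) sin((2j+1)θ)` when `r ∈ ℕ`. -/
noncomputable def gAux (r θ : ℝ) : ℝ :=
  -Real.sin (r * θ) ^ 2
    + 2 * r * Real.sin (r * θ) * Real.cos (r * θ) * Real.sin θ * Real.cos θ
    - r ^ 2 * Real.sin θ ^ 2 + 2 * r ^ 2 * Real.sin θ ^ 2 * Real.sin (r * θ) ^ 2

lemma gAux_zero (θ : ℝ) : gAux 0 θ = 0 := by
  simp [gAux]

/-- Trig form of Gegenbauer(2): `2 sin³θ C_m(cosθ) = sin((m+2)θ)cosθ − (m+2)cos((m+2)θ)sinθ`. -/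
lemma geg_trig (m : ℕ) (θ : ℝ) :
    2 * Real.sin θ ^ 3 * gegenbauer 2 m (Real.cos θ)
      = Real.sin (((m : ℝ) + 2) * θ) * Real.cos θ
        - ((m : ℝ) + 2) * Real.cos (((m : ℝ) + 2) * θ) * Real.sin θ := by
  induction m using Nat.twoStepInduction with
  | zero =>
      have e : (((0 : ℕ) : ℝ) + 2) * θ = θ + θ := by push_cast; ring
      rw [e, Real.sin_add, Real.cos_add]
      show 2 * Real.sin θ ^ 3 * 1 = _
      push_cast
      ring
  | one =>
      have e : (((1 : ℕ) : ℝ) + 2) * θ = θ + (θ + θ) := by push_cast; ring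
      rw [e]
      simp only [Real.sin_add, Real.cos_add]
      show 2 * Real.sin θ ^ 3 * (2 * 2 * Real.cos θ) = _
      push_cast
      ring
  | more n ih0 ih1 =>
      have hne : ((n : ℝ) + 2) ≠ 0 := by positivity
      have c4 : ((n + 2 : ℕ) : ℝ) + 2 = (n : ℝ) + 2 + 2 := by push_cast; ring
      have c3 : ((n + 1 : ℕ) : ℝ) + 2 = (n : ℝ) + 3 := by push_cast; ring
      have e4 : ((n : ℝ) + 2 + 2) * θ = ((n : ℝ) + 3) * θ + θ := by ring
      have e2 : ((n : ℝ) + 2) * θ = ((n : ℝ) + 3) * θ - θ := by ring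
      rw [c3] at ih1
      rw [e2, Real.sin_sub, Real.cos_sub] at ih0
      rw [c4, e4, Real.sin_add, Real.cos_add]
      have hrec : ((n : ℝ) + 2) * gegenbauer 2 (n + 2) (Real.cos θ)
          = 2 * ((n : ℝ) + 3) * Real.cos θ * gegenbauer 2 (n + 1) (Real.cos θ)
            - ((n : ℝ) + 4) * gegenbauer 2 n (Real.cos θ) := by
        have hgeg : gegenbauer 2 (n + 2) (Real.cos θ)
            = (2 * ((n : ℝ) + 1 + 2) * Real.cos θ * gegenbauer 2 (n + 1) (Real.cos θ)
              - ((n : ℝ) + 2 * 2) * gegenbauer 2 n (Real.cos θ)) / ((n : ℝ) + 2) := rfl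
        rw [hgeg]
        field_simp
        ring
      apply mul_left_cancel₀ hne
      calc ((n : ℝ) + 2) * (2 * Real.sin θ ^ 3 * gegenbauer 2 (n + 2) (Real.cos θ))
          = 2 * Real.sin θ ^ 3 * (((n : ℝ) + 2) * gegenbauer 2 (n + 2) (Real.cos θ)) := by ring
        _ = 2 * Real.sin θ ^ 3
              * (2 * ((n : ℝ) + 3) * Real.cos θ * gegenbauer 2 (n + 1) (Real.cos θ)
                - ((n : ℝ) + 4) * gegenbauer 2 n (Real.cos θ)) := by rw [hrec]
        _ = 2 * ((n : ℝ) + 3) * Real.cos θ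
              * (2 * Real.sin θ ^ 3 * gegenbauer 2 (n + 1) (Real.cos θ))
            - ((n : ℝ) + 4) * (2 * Real.sin θ ^ 3 * gegenbauer 2 n (Real.cos θ)) := by ring
        _ = 2 * ((n : ℝ) + 3) * Real.cos θ
              * (Real.sin (((n : ℝ) + 3) * θ) * Real.cos θ
                - ((n : ℝ) + 3) * Real.cos (((n : ℝ) + 3) * θ) * Real.sin θ)
            - ((n : ℝ) + 4)
              * ((Real.sin (((n : ℝ) + 3) * θ) * Real.cos θ
                  - Real.cos (((n : ℝ) + 3) * θ) * Real.sin θ)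
                  * Real.cos θ
                - ((n : ℝ) + 2)
                  * (Real.cos (((n : ℝ) + 3) * θ) * Real.cos θ
                    + Real.sin (((n : ℝ) + 3) * θ) * Real.sin θ) * Real.sin θ) := by
            rw [ih1, ih0]
        _ = ((n : ℝ) + 2)
              * ((Real.sin (((n : ℝ) + 3) * θ) * Real.cos θ
                  + Real.cos (((n : ℝ) + 3) * θ) * Real.sin θ) * Real.cos θ
                - ((n : ℝ) + 2 + 2)
                  * (Real.cos (((n : ℝ) + 3) * θ) * Real.cos θ
                    - Real.sin (((n : ℝ) + 3) * θ) * Real.sin θ) * Real.sin θ) := by ring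

lemma telesc1 (r θ : ℝ) :
    Real.sin θ * Real.sin ((2 * r + 1) * θ)
      = Real.sin ((r + 1) * θ) ^ 2 - Real.sin (r * θ) ^ 2 := by
  have h1 := Real.sin_sq_add_cos_sq θ
  rw [show (2 * r + 1) * θ = r * θ + (r + 1) * θ from by ring, Real.sin_add,
    show (r + 1) * θ = r * θ + θ from by ring, Real.sin_add, Real.cos_add]
  linear_combination (-(Real.sin (r * θ)) ^ 2) * h1

lemma telesc2 (r θ : ℝ) :
    (2 * r ^ 2 + 2 * r) * Real.sin θ ^ 3 * Real.sin ((2 * r + 1) * θ)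
      = gAux (r + 1) θ - gAux r θ := by
  have h1 := Real.sin_sq_add_cos_sq θ
  have h2 := Real.sin_sq_add_cos_sq (r * θ)
  unfold gAux
  rw [show (2 * r + 1) * θ = r * θ + (r + 1) * θ from by ring, Real.sin_add,
    show (r + 1) * θ = r * θ + θ from by ring, Real.sin_add, Real.cos_add]
  linear_combination
    (Real.sin (r * θ) ^ 2
      + (-2 - 2 * r) * Real.sin θ * Real.cos θ * Real.sin (r * θ) * Real.cos (r * θ)
      + (-2 - 2 * r) * Real.sin θ ^ 2 * Real.cos (r * θ) ^ 2
      + (-2 * r - 2 * r ^ 2) * Real.sin θ ^ 2 * Real.sin (r * θ) ^ 2) * h1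
    + ((-1 - 2 * r) * Real.sin θ ^ 2) * h2

lemma mainAlg (N θ : ℝ) :
    (Real.sin (N * θ) * Real.cos θ - N * Real.cos (N * θ) * Real.sin θ) ^ 2
      = (N ^ 2 - 1) * Real.sin θ ^ 2 * Real.sin (N * θ) ^ 2 - gAux N θ := by
  have h1 := Real.sin_sq_add_cos_sq θ
  have h2 := Real.sin_sq_add_cos_sq (N * θ)
  unfold gAux
  linear_combination (Real.sin (N * θ) ^ 2) * h1 + (N ^ 2 * Real.sin θ ^ 2) * h2

lemma sumW (N : ℕ) (θ : ℝ) :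
    Real.sin θ * ∑ j ∈ Finset.range N, Real.sin ((2 * (j : ℝ) + 1) * θ)
      = Real.sin ((N : ℝ) * θ) ^ 2 := by
  rw [Finset.mul_sum]
  calc ∑ j ∈ Finset.range N, Real.sin θ * Real.sin ((2 * (j : ℝ) + 1) * θ)
      = ∑ j ∈ Finset.range N,
          (Real.sin (((j + 1 : ℕ) : ℝ) * θ) ^ 2 - Real.sin ((j : ℝ) * θ) ^ 2) := by
        refine Finset.sum_congr rfl fun j _ => ?_
        push_cast
        exact telesc1 (j : ℝ) θ
    _ = Real.sin ((N : ℝ) * θ) ^ 2 - Real.sin (((0 : ℕ) : ℝ) * θ) ^ 2 :=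
        Finset.sum_range_sub (fun j : ℕ => Real.sin ((j : ℝ) * θ) ^ 2) N
    _ = Real.sin ((N : ℝ) * θ) ^ 2 := by simp

lemma sumV (N : ℕ) (θ : ℝ) :
    Real.sin θ ^ 3 * ∑ j ∈ Finset.range N,
        (2 * (j : ℝ) ^ 2 + 2 * (j : ℝ)) * Real.sin ((2 * (j : ℝ) + 1) * θ)
      = gAux (N : ℝ) θ := by
  rw [Finset.mul_sum]
  calc ∑ j ∈ Finset.range N,
        Real.sin θ ^ 3 * ((2 * (j : ℝ) ^ 2 + 2 * (j : ℝ)) * Real.sin ((2 * (j : ℝ) + 1) * θ))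
      = ∑ j ∈ Finset.range N, (gAux (((j + 1 : ℕ) : ℝ)) θ - gAux ((j : ℝ)) θ) := by
        refine Finset.sum_congr rfl fun j _ => ?_
        push_cast
        rw [← telesc2 (j : ℝ) θ]; ring
    _ = gAux ((N : ℝ)) θ - gAux (((0 : ℕ) : ℝ)) θ :=
        Finset.sum_range_sub (fun j : ℕ => gAux ((j : ℝ)) θ) N
    _ = gAux ((N : ℝ)) θ := by rw [Nat.cast_zero, gAux_zero]; ring

/-- Key pointwise expansion of the integrand for `sin θ ≠ 0`. -/
lemma integrand_eq (m : ℕ) (θ : ℝ) (hs : Real.sin θ ≠ 0) :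
    Real.sin θ * ((1 - Real.cos θ ^ 2) * gegenbauer 2 m (Real.cos θ) ^ 2)
      = ∑ j ∈ Finset.range (m + 2),
          ((((m : ℝ) + 2) ^ 2 - 1 - 2 * (j : ℝ) ^ 2 - 2 * (j : ℝ)) / 4)
            * Real.sin ((2 * (j : ℝ) + 1) * θ) := by
  have h4 : (4 * Real.sin θ ^ 3 : ℝ) ≠ 0 := by
    have := pow_ne_zero 3 hs
    intro h; apply this; linarith [h]
  apply mul_left_cancel₀ h4
  have hc : (1 : ℝ) - Real.cos θ ^ 2 = Real.sin θ ^ 2 := by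
    linear_combination (-1 : ℝ) * Real.sin_sq_add_cos_sq θ
  rw [hc]
  have key : 4 * Real.sin θ ^ 3 * (Real.sin θ * (Real.sin θ ^ 2 * gegenbauer 2 m (Real.cos θ) ^ 2))
      = (2 * Real.sin θ ^ 3 * gegenbauer 2 m (Real.cos θ)) ^ 2 := by ring
  rw [key, geg_trig m θ, mainAlg ((m : ℝ) + 2) θ]
  have hW := sumW (m + 2) θ
  have hV := sumV (m + 2) θ
  have hcast : ((m + 2 : ℕ) : ℝ) = (m : ℝ) + 2 := by push_cast; ring
  rw [hcast] at hW hV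
  rw [← hV, ← hW]
  rw [Finset.mul_sum, Finset.mul_sum, Finset.mul_sum, Finset.mul_sum, ← Finset.sum_sub_distrib]
  refine Finset.sum_congr rfl fun j _ => by ring


lemma continuous_geg (lam : ℝ) (m : ℕ) : Continuous (gegenbauer lam m) := by
  induction m using Nat.twoStepInduction with
  | zero => show Continuous fun _ : ℝ => (1 : ℝ); exact continuous_const
  | one =>
      show Continuous fun x : ℝ => 2 * lam * x
      exact continuous_const.mul continuous_id
  | more n ih0 ih1 =>
      show Continuous fun x : ℝ =>
        (2 * ((n : ℝ) + 1 + lam) * x * gegenbauer lam (n + 1) x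
          - ((n : ℝ) + 2 * lam) * gegenbauer lam n x) / ((n : ℝ) + 2)
      exact (((continuous_const.mul continuous_id).mul ih1).sub
        (continuous_const.mul ih0)).div_const _

lemma subst_cos (f : ℝ → ℝ) (hf : Continuous f) :
    ∫ x in (0:ℝ)..1, f x = ∫ θ in (0:ℝ)..(π/2), Real.sin θ * f (Real.cos θ) := by
  have h := intervalIntegral.integral_comp_smul_deriv
    (a := (0:ℝ)) (b := π/2) (f := Real.cos) (f' := fun θ => -Real.sin θ) (g := f)
    (fun x _ => Real.hasDerivAt_cos x) (by fun_prop) hf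
  rw [Real.cos_zero, Real.cos_pi_div_two] at h
  rw [intervalIntegral.integral_symm 1 0, ← h]
  rw [← intervalIntegral.integral_neg]
  congr 1
  funext θ
  simp [smul_eq_mul]

lemma integral_sin_odd (j : ℕ) :
    ∫ θ in (0:ℝ)..(π/2), Real.sin ((2 * (j : ℝ) + 1) * θ) = 1 / (2 * (j : ℝ) + 1) := by
  have hk : (2 * (j : ℝ) + 1) ≠ 0 := by positivity
  have hder : ∀ θ ∈ Set.uIcc (0:ℝ) (π/2),
      HasDerivAt (fun θ : ℝ => -Real.cos ((2 * (j : ℝ) + 1) * θ) / (2 * (j : ℝ) + 1))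
        (Real.sin ((2 * (j : ℝ) + 1) * θ)) θ := by
    intro θ _
    have h1 : HasDerivAt (fun θ : ℝ => (2 * (j : ℝ) + 1) * θ) (2 * (j : ℝ) + 1) θ := by
      simpa using (hasDerivAt_id θ).const_mul (2 * (j : ℝ) + 1)
    have h2 := ((Real.hasDerivAt_cos ((2 * (j : ℝ) + 1) * θ)).comp θ h1).neg.div_const
      (2 * (j : ℝ) + 1)
    convert h2 using 1
    · rfl
    · rfl
    · rfl
    · rw [eq_div_iff hk]; ring
  rw [intervalIntegral.integral_eq_sub_of_hasDerivAt hder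
    ((Continuous.intervalIntegrable (by fun_prop) _ _))]
  have hcos : Real.cos ((2 * (j : ℝ) + 1) * (π/2)) = 0 := by
    rw [show (2 * (j : ℝ) + 1) * (π/2) = (j : ℝ) * π + π/2 from by ring, Real.cos_add,
      Real.cos_pi_div_two, Real.sin_pi_div_two, Real.sin_nat_mul_pi]
    ring
  rw [hcos]
  norm_num
  ring

lemma sum_odds (N : ℕ) : ∑ j ∈ Finset.range N, (2 * (j : ℝ) + 1) = (N : ℝ) ^ 2 := by
  induction N with
  | zero => simp
  | succ n ih =>
      rw [Finset.sum_range_succ, ih]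
      push_cast
      ring

lemma digamma_add_one {x : ℝ} (hx : 0 < x) : digamma (x + 1) = digamma x + 1 / x := by
  have hne : ∀ y : ℝ, 0 < y → ∀ m : ℕ, y ≠ -↑m := fun y hy m =>
    ((neg_nonpos.mpr m.cast_nonneg).trans_lt hy).ne'
  have hdiff : DifferentiableAt ℝ Real.Gamma x := Real.differentiableAt_Gamma (hne x hx)
  have hdiff1 : DifferentiableAt ℝ Real.Gamma (x + 1) :=
    Real.differentiableAt_Gamma (hne (x + 1) (by linarith))
  have h1 : HasDerivAt (fun y : ℝ => Real.Gamma (y + 1)) (deriv Real.Gamma (x + 1)) x :=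
    hdiff1.hasDerivAt.comp_add_const x 1
  have h2 : HasDerivAt (fun y : ℝ => y * Real.Gamma y)
      (1 * Real.Gamma x + x * deriv Real.Gamma x) x :=
    (hasDerivAt_id x).mul hdiff.hasDerivAt
  have heq : (fun y : ℝ => Real.Gamma (y + 1)) =ᶠ[nhds x] fun y : ℝ => y * Real.Gamma y := by
    filter_upwards [eventually_gt_nhds hx] with y hy
    exact Real.Gamma_add_one hy.ne'
  have h1' : HasDerivAt (fun y : ℝ => y * Real.Gamma y) (deriv Real.Gamma (x + 1)) x :=
    h1.congr_of_eventuallyEq heq.symm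
  have hkey : deriv Real.Gamma (x + 1) = 1 * Real.Gamma x + x * deriv Real.Gamma x :=
    h1'.unique h2
  have hΓ : Real.Gamma x ≠ 0 := (Real.Gamma_pos_of_pos hx).ne'
  unfold digamma
  rw [hkey, Real.Gamma_add_one hx.ne']
  field_simp
  ring

lemma digamma_half_add (n : ℕ) :
    digamma ((n : ℝ) + 1/2)
      = -(Real.eulerMascheroniConstant + Real.log 4)
        + 2 * ∑ j ∈ Finset.range n, (1 / (2 * (j : ℝ) + 1)) := by
  induction n with
  | zero =>
      have hπ : Real.sqrt π ≠ 0 := by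
        positivity
      have h : digamma ((0 : ℝ) + 1/2)
          = (-Real.sqrt π * (Real.eulerMascheroniConstant + 2 * Real.log 2)) / Real.sqrt π := by
        unfold digamma
        rw [show ((0:ℝ) + 1/2) = 1/2 from by norm_num, Real.hasDerivAt_Gamma_one_half.deriv,
          Real.Gamma_one_half_eq]
      rw [Nat.cast_zero, h]
      rw [show (4:ℝ) = 2 ^ 2 from by norm_num, Real.log_pow]
      field_simp
      ring
  | succ n ih =>
      have hx : (0:ℝ) < (n : ℝ) + 1/2 := by positivity
      have e : ((n + 1 : ℕ) : ℝ) + 1/2 = ((n : ℝ) + 1/2) + 1 := by push_cast; ring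
      rw [e, digamma_add_one hx, ih, Finset.sum_range_succ]
      have h2 : (2 * (n : ℝ) + 1) ≠ 0 := by positivity
      have hx' : ((n : ℝ) + 1/2) ≠ 0 := hx.ne'
      field_simp
      ring

end GegAux

theorem gegenbauer_two_weighted_L2_norm (n : ℕ) (hn : 2 ≤ n) :
    (∫ x in (0:ℝ)..1, (1 - x ^ 2) * (gegenbauer 2 (n - 2) x) ^ 2) =
      (1 / 16) * (2 * (n : ℝ) ^ 2 - 1)
          * (digamma ((n : ℝ) + 1/2) + Real.eulerMascheroniConstant + Real.log 4)
        - (n : ℝ) ^ 2 / 8 := by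
  obtain ⟨m, rfl⟩ : ∃ m, n = m + 2 := ⟨n - 2, by omega⟩
  rw [show m + 2 - 2 = m from by omega]
  have hf : Continuous (fun x : ℝ => (1 - x ^ 2) * gegenbauer 2 m x ^ 2) :=
    (continuous_const.sub (continuous_pow 2)).mul ((GegAux.continuous_geg 2 m).pow 2)
  rw [GegAux.subst_cos _ hf]
  have hππ : (0:ℝ) ≤ π/2 := by positivity
  have hcongr : ∫ θ in (0:ℝ)..(π/2),
        Real.sin θ * ((1 - Real.cos θ ^ 2) * gegenbauer 2 m (Real.cos θ) ^ 2)
      = ∫ θ in (0:ℝ)..(π/2), ∑ j ∈ Finset.range (m + 2),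
          ((((m : ℝ) + 2) ^ 2 - 1 - 2 * (j : ℝ) ^ 2 - 2 * (j : ℝ)) / 4)
            * Real.sin ((2 * (j : ℝ) + 1) * θ) := by
    apply intervalIntegral.integral_congr_ae
    refine MeasureTheory.ae_of_all _ fun θ hθ => ?_
    rw [Set.uIoc_of_le hππ] at hθ
    have hs : Real.sin θ ≠ 0 := by
      have hπ := Real.pi_pos
      exact (Real.sin_pos_of_pos_of_lt_pi hθ.1 (lt_of_le_of_lt hθ.2 (by linarith))).ne'
    exact GegAux.integrand_eq m θ hs
  rw [hcongr]
  rw [intervalIntegral.integral_finset_sum (fun j _ =>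
    (Continuous.intervalIntegrable (by fun_prop) _ _))]
  simp_rw [intervalIntegral.integral_const_mul, GegAux.integral_sin_odd]
  rw [GegAux.digamma_half_add (m + 2)]
  have hsum : ∀ j ∈ Finset.range (m + 2),
      ((((m : ℝ) + 2) ^ 2 - 1 - 2 * (j : ℝ) ^ 2 - 2 * (j : ℝ)) / 4) * (1 / (2 * (j : ℝ) + 1))
        = (1/8) * (2 * ((m : ℝ) + 2) ^ 2 - 1) * (1 / (2 * (j : ℝ) + 1))
          - (2 * (j : ℝ) + 1) / 8 := by
    intro j _
    have h2 : (2 * (j : ℝ) + 1) ≠ 0 := by positivity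
    field_simp
    ring
  rw [Finset.sum_congr rfl hsum, Finset.sum_sub_distrib, ← Finset.mul_sum, ← Finset.sum_div,
    GegAux.sum_odds]
  push_cast
  ring
end

section
/- For every integer n ≥ 2, ∫₀¹ [C_{n−2}^{(2)}(x)]² dx = n⁴/16 + (1/64)(4n²−1)·(ψ(n+1/2) + γ + log 4) − 5n²/32, where ψ is the digamma function and γ is the Euler–Mascheroni constant. -/
open Real MeasureTheory Finset

open Polynomial in
noncomputable def gegP : ℕ → Polynomial ℝ
  | 0 => 1
  | 1 => Polynomial.C 4 * Polynomial.X
  | n + 2 => Polynomial.C (((n:ℝ)+2)⁻¹) *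
      (Polynomial.C (2*((n:ℝ)+3)) * (Polynomial.X * gegP (n+1)) - Polynomial.C ((n:ℝ)+4) * gegP n)

lemma gegP_eval : ∀ (n : ℕ) (x : ℝ), gegenbauer 2 n x = (gegP n).eval x
  | 0, x => by simp [gegenbauer, gegP]
  | 1, x => by norm_num [gegenbauer, gegP]
  | n+2, x => by
    rw [gegenbauer, gegP]
    simp only [Polynomial.eval_mul, Polynomial.eval_sub, Polynomial.eval_C, Polynomial.eval_X,
      gegP_eval (n+1) x, gegP_eval n x, div_eq_inv_mul]
    ring

open Polynomial

lemma gegP_rec (n : ℕ) : Polynomial.C ((n:ℝ)+2) * gegP (n+2)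
    = Polynomial.C (2*((n:ℝ)+3)) * (Polynomial.X * gegP (n+1)) - Polynomial.C ((n:ℝ)+4) * gegP n := by
  rw [gegP, ← mul_assoc, ← Polynomial.C_mul,
    mul_inv_cancel₀ (by positivity : ((n:ℝ)+2) ≠ 0), Polynomial.C_1, one_mul]

lemma gegP_deriv : ∀ n : ℕ,
    (Polynomial.X * derivative (gegP (n+1)) - derivative (gegP n)
        = Polynomial.C ((n:ℝ)+1) * gegP (n+1)) ∧
    (derivative (gegP (n+1)) - Polynomial.X * derivative (gegP n)
        = Polynomial.C ((n:ℝ)+4) * gegP n) := by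
  intro n
  induction n with
  | zero =>
    constructor <;> simp [gegP]
  | succ n ih =>
    obtain ⟨hE, hE2⟩ := ih
    have hC2 : (Polynomial.C ((n:ℝ)+2)) ≠ 0 := Polynomial.C_ne_zero.mpr (by positivity)
    have hd := congrArg derivative (gegP_rec n)
    simp only [derivative_mul, derivative_sub, derivative_C, derivative_X, zero_mul, zero_add,
      one_mul] at hd
    have hD : derivative (gegP (n+2))
        = Polynomial.C (2*((n:ℝ)+3)) * gegP (n+1) + derivative (gegP n) := by
      refine mul_left_cancel₀ hC2 ?_
      linear_combination (norm := (simp only [map_add, map_mul, map_ofNat, map_one]; ring1))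
        hd + Polynomial.C (2*((n:ℝ)+3)) * hE
    have h12 : n + 1 + 1 = n + 2 := rfl
    rw [h12]
    push_cast
    constructor
    · rw [hD]
      linear_combination (norm := (simp only [map_add, map_mul, map_ofNat, map_one]; ring1))
        - gegP_rec n - hE2
    · rw [hD]
      linear_combination (norm := (simp only [map_add, map_mul, map_ofNat, map_one]; ring1)) - hE

lemma gegP_key (n : ℕ) :
    Polynomial.C (((n:ℝ)+2)*((n:ℝ)+4)*(2*(n:ℝ)+3)) * (gegP (n+1))^2
      - Polynomial.C (((n:ℝ)+2)*((n:ℝ)+4)*(2*(n:ℝ)+7)) * (gegP n)^2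
    = derivative (Polynomial.C (-(((n:ℝ)+2)*(3*(n:ℝ)+8))) * (Polynomial.X * (gegP (n+1))^2)
        + Polynomial.C (((n:ℝ)+2)*((n:ℝ)+4)) * (Polynomial.X * (gegP n)^2)
        + Polynomial.C (2*((n:ℝ)+2)*((n:ℝ)+2)) * (gegP (n+1) * gegP (n+2))) := by
  have hu' : derivative (gegP (n+1)) = Polynomial.X * derivative (gegP n)
      + Polynomial.C ((n:ℝ)+4) * gegP n := by linear_combination (gegP_deriv n).2
  have hw' : derivative (gegP (n+2)) = Polynomial.X * derivative (gegP (n+1))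
      + Polynomial.C ((n:ℝ)+5) * gegP (n+1) := by
    have h := (gegP_deriv (n+1)).2
    push_cast at h
    linear_combination (norm := (simp only [map_add, map_mul, map_ofNat, map_one]; ring1)) h
  simp only [derivative_add, derivative_mul, derivative_C, derivative_X, derivative_pow,
    zero_mul, zero_add, one_mul, Nat.cast_ofNat, pow_one]
  rw [hw', hu']
  linear_combination (norm := (simp only [map_add, map_mul, map_ofNat, map_one, map_neg]; ring1))
    (-(2:Polynomial ℝ) * Polynomial.C ((n:ℝ)+2) * (Polynomial.X * derivative (gegP n)
      + Polynomial.C ((n:ℝ)+4) * gegP n)) * gegP_rec n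

lemma gegP_eval_one : ∀ n : ℕ, (gegP n).eval 1 = ((n:ℝ)+1)*((n:ℝ)+2)*((n:ℝ)+3)/6
  | 0 => by norm_num [gegP]
  | 1 => by norm_num [gegP]
  | n+2 => by
    have h1 := gegP_eval_one (n+1)
    have h2 := gegP_eval_one n
    rw [gegP]
    simp only [Polynomial.eval_mul, Polynomial.eval_sub, Polynomial.eval_C, Polynomial.eval_X,
      h1, h2]
    push_cast
    have hne : ((n:ℝ)+2) ≠ 0 := by positivity
    field_simp
    ring

lemma gegP_eval_zero : ∀ n : ℕ, (gegP n).eval 0 * (gegP (n+1)).eval 0 = 0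
  | 0 => by norm_num [gegP]
  | n+1 => by
    have h := gegP_eval_zero n
    rw [show n+1+1 = n+2 from rfl, gegP]
    simp only [Polynomial.eval_mul, Polynomial.eval_sub, Polynomial.eval_C, Polynomial.eval_X,
      mul_zero, zero_mul, zero_sub]
    linear_combination (-(((n:ℝ)+2)⁻¹ * ((n:ℝ)+4))) * h

lemma integral_poly_deriv (p : Polynomial ℝ) :
    ∫ x in (0:ℝ)..1, (derivative p).eval x = p.eval 1 - p.eval 0 := by
  exact intervalIntegral.integral_eq_sub_of_hasDerivAt (fun x _ => p.hasDerivAt x)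
    ((derivative p).continuous.intervalIntegrable _ _)

noncomputable def gegI (n : ℕ) : ℝ := ∫ x in (0:ℝ)..1, ((gegP n).eval x)^2

lemma gegI_rec (n : ℕ) :
    (2*(n:ℝ)+3) * gegI (n+1) = (2*(n:ℝ)+7) * gegI n + ((n:ℝ)+2)^2*((n:ℝ)+3)^2/4 := by
  have h := congrArg (fun p : Polynomial ℝ => ∫ x in (0:ℝ)..1, p.eval x) (gegP_key n)
  simp only [Polynomial.eval_sub, Polynomial.eval_mul, Polynomial.eval_C, Polynomial.eval_pow,
    Polynomial.eval_X] at h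
  rw [integral_poly_deriv] at h
  have hc1 : Continuous fun x : ℝ => ((gegP (n+1)).eval x)^2 := (gegP (n+1)).continuous.pow 2
  have hc0 : Continuous fun x : ℝ => ((gegP n).eval x)^2 := (gegP n).continuous.pow 2
  rw [intervalIntegral.integral_sub
        ((show Continuous fun x : ℝ => ((n:ℝ)+2)*((n:ℝ)+4)*(2*(n:ℝ)+3) * ((gegP (n+1)).eval x)^2 from continuous_const.mul hc1).intervalIntegrable _ _)
        ((show Continuous fun x : ℝ => ((n:ℝ)+2)*((n:ℝ)+4)*(2*(n:ℝ)+7) * ((gegP n).eval x)^2 from continuous_const.mul hc0).intervalIntegrable _ _),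
      intervalIntegral.integral_const_mul, intervalIntegral.integral_const_mul] at h
  have hz : (gegP (n+1)).eval 0 * (gegP (n+2)).eval 0 = 0 := gegP_eval_zero (n+1)
  have h1a := gegP_eval_one n
  have h1b := gegP_eval_one (n+1)
  have h1c := gegP_eval_one (n+2)
  push_cast at h1b h1c
  simp only [Polynomial.eval_add, Polynomial.eval_mul, Polynomial.eval_sub, Polynomial.eval_C,
    Polynomial.eval_pow, Polynomial.eval_X, h1a, h1b, h1c, mul_zero, zero_mul, mul_one,
    add_zero, zero_add] at h
  rw [show gegI (n+1) = ∫ x in (0:ℝ)..1, ((gegP (n+1)).eval x)^2 from rfl,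
      show gegI n = ∫ x in (0:ℝ)..1, ((gegP n).eval x)^2 from rfl]
  have hne : (((n:ℝ)+2)*((n:ℝ)+4)) ≠ 0 := by positivity
  apply mul_left_cancel₀ hne
  rw [hz] at h
  linear_combination h

lemma gegI_closed : ∀ m : ℕ, gegI m = ((m:ℝ)+2)^4/16
    + (1/64)*(4*((m:ℝ)+2)^2 - 1) * (∑ k ∈ Finset.range (m+2), 2/(2*(k:ℝ)+1))
    - 5*((m:ℝ)+2)^2/32
  | 0 => by
    have : gegI 0 = 1 := by
      simp [gegI, gegP]
    rw [this, Finset.sum_range_succ, Finset.sum_range_one]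
    norm_num
  | m+1 => by
    have h := gegI_rec m
    have ih := gegI_closed m
    have h3 : (2*(m:ℝ)+3) ≠ 0 := by positivity
    have h5 : (2*(m:ℝ)+5) ≠ 0 := by positivity
    have hs : (∑ k ∈ Finset.range (m+1+2), 2/(2*(k:ℝ)+1))
        = (∑ k ∈ Finset.range (m+2), 2/(2*(k:ℝ)+1)) + 2/(2*((m:ℝ)+2)+1) := by
      rw [show m+1+2 = (m+2)+1 from rfl]
      conv_lhs => rw [Finset.sum_range_succ]
      push_cast
      ring
    apply mul_left_cancel₀ h3
    rw [h, ih, hs]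
    push_cast
    have h9 : (2*(m:ℝ)+2*2+1) ≠ 0 := by positivity
    field_simp
    ring

lemma digamma_add_one {x : ℝ} (hx : 0 < x) : digamma (x+1) = digamma x + 1/x := by
  have hdiff : DifferentiableAt ℝ Real.Gamma x :=
    Real.differentiableAt_Gamma (fun m =>
      (lt_of_le_of_lt (neg_nonpos.mpr (Nat.cast_nonneg m)) hx).ne')
  have hGx : Real.Gamma x ≠ 0 := (Real.Gamma_pos_of_pos hx).ne'
  have h1 : HasDerivAt (fun y : ℝ => y * Real.Gamma y)
      (1 * Real.Gamma x + x * deriv Real.Gamma x) x :=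
    (hasDerivAt_id x).mul hdiff.hasDerivAt
  have h2 : (fun y : ℝ => Real.Gamma (y+1)) =ᶠ[nhds x] fun y => y * Real.Gamma y := by
    filter_upwards [eventually_gt_nhds hx] with y hy
    exact Real.Gamma_add_one hy.ne'
  have h3 : HasDerivAt (fun y : ℝ => Real.Gamma (y+1))
      (1 * Real.Gamma x + x * deriv Real.Gamma x) x := h1.congr_of_eventuallyEq h2
  have h5 : deriv Real.Gamma (x+1) = Real.Gamma x + x * deriv Real.Gamma x := by
    rw [← deriv_comp_add_const]
    rw [h3.deriv]; ring
  rw [digamma, digamma, h5, Real.Gamma_add_one hx.ne']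
  field_simp
  ring

lemma digamma_half : ∀ n : ℕ, digamma ((n:ℝ)+1/2)
    = -(Real.eulerMascheroniConstant + 2*Real.log 2) + ∑ k ∈ Finset.range n, 2/(2*(k:ℝ)+1)
  | 0 => by
    have hs : Real.sqrt Real.pi ≠ 0 := by positivity
    rw [show ((0:ℕ):ℝ)+1/2 = 1/2 by norm_num, digamma, Real.hasDerivAt_Gamma_one_half.deriv,
      Real.Gamma_one_half_eq]
    field_simp
    ring
  | n+1 => by
    have h0 : (0:ℝ) < (n:ℝ)+1/2 := by positivity
    have := digamma_add_one h0
    rw [show ((n+1:ℕ):ℝ)+1/2 = ((n:ℝ)+1/2)+1 by push_cast; ring, this, digamma_half n,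
      Finset.sum_range_succ]
    have : 2*(n:ℝ)+1 ≠ 0 := by positivity
    field_simp
    ring

theorem gegenbauer_two_L2_norm (n : ℕ) (hn : 2 ≤ n) :
    (∫ x in (0:ℝ)..1, (gegenbauer 2 (n - 2) x) ^ 2) =
      (n : ℝ) ^ 4 / 16
        + (1 / 64) * (4 * (n : ℝ) ^ 2 - 1)
            * (digamma ((n : ℝ) + 1/2) + Real.eulerMascheroniConstant + Real.log 4)
        - 5 * (n : ℝ) ^ 2 / 32 := by
  obtain ⟨m, rfl⟩ : ∃ m, n = m + 2 := ⟨n - 2, by omega⟩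
  have hidx : m + 2 - 2 = m := by omega
  have hI : (∫ x in (0:ℝ)..1, (gegenbauer 2 (m + 2 - 2) x) ^ 2) = gegI m := by
    rw [hidx, gegI]
    congr 1
    funext x
    rw [gegP_eval]
  have hlog : Real.log 4 = 2 * Real.log 2 := by
    rw [show (4:ℝ) = 2^2 by norm_num, Real.log_pow]
    push_cast; ring
  have hdg := digamma_half (m+2)
  push_cast at hdg
  rw [hI, gegI_closed m, hlog]
  push_cast
  rw [hdg]
  ring
end

section
/- For every λ ∈ (−1/2, 0) ∪ (0, ∞) and every integer n ≥ 0, ∫₀¹ (x²·[C_{n+1}^{(λ+1)}(x)]² − [C_n^{(λ+1)}(x)]²) dx = ((n+2)/(4λ²))·([C_{n+2}^{(λ)}(1)]² − (n+3)·‖C_{n+2}^{(λ)}‖₂²). -/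
open Real MeasureTheory Finset

namespace GegenbauerAux

lemma geg_rec (lam : ℝ) (n : ℕ) (x : ℝ) :
    ((n:ℝ)+2) * gegenbauer lam (n+2) x =
    2*((n:ℝ)+1+lam)*x*gegenbauer lam (n+1) x - ((n:ℝ)+2*lam)*gegenbauer lam n x := by
  have h : ((n:ℝ)+2) ≠ 0 := by positivity
  rw [show gegenbauer lam (n+2) x = (2 * ((n : ℝ) + 1 + lam) * x * gegenbauer lam (n + 1) x
        - ((n : ℝ) + 2 * lam) * gegenbauer lam n x) / ((n : ℝ) + 2) from rfl]
  field_simp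

lemma geg_cont (lam : ℝ) (n : ℕ) : Continuous (gegenbauer lam n) := by
  induction n using Nat.twoStepInduction with
  | zero => show Continuous fun _ : ℝ => (1:ℝ); fun_prop
  | one => show Continuous fun x : ℝ => 2 * lam * x; fun_prop
  | more n ih0 ih1 =>
    have h : gegenbauer lam (n+2) = fun x =>
        (2 * ((n : ℝ) + 1 + lam) * x * gegenbauer lam (n + 1) x
        - ((n : ℝ) + 2 * lam) * gegenbauer lam n x) / ((n : ℝ) + 2) := rfl
    rw [h]; fun_prop

/-- Identity (III): `λ (C_{n+2}^{(λ+1)} - C_n^{(λ+1)}) = (n+2+λ) C_{n+2}^{(λ)}`. -/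
lemma geg_idIII (lam : ℝ) (hl : -(1/2:ℝ) < lam) : ∀ n : ℕ, ∀ x : ℝ,
    lam * (gegenbauer (lam+1) (n+2) x - gegenbauer (lam+1) n x)
      = ((n:ℝ)+2+lam) * gegenbauer lam (n+2) x := by
  intro n
  induction n using Nat.twoStepInduction with
  | zero => intro x; simp [gegenbauer]; ring
  | one => intro x; simp [gegenbauer]; ring
  | more n ih0 ih1 =>
    intro x
    have e1 := geg_rec (lam+1) (n+2) x
    have e2 := geg_rec (lam+1) n x
    have e3 := geg_rec lam (n+2) x
    have e4 := ih1 x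
    have e5 := ih0 x
    simp only [show n+2+2 = n+4 from rfl, show n+2+1 = n+3 from rfl,
      show n+1+2 = n+3 from rfl, show n+1+1 = n+2 from rfl] at e1 e3 e4
    push_cast at e1 e3 e4
    set k : ℝ := (n:ℝ) with hk
    have h2 : ((k+2+lam)*(k+4)) ≠ 0 := by
      have : (0:ℝ) < k+2+lam := by
        have : (0:ℝ) ≤ k := Nat.cast_nonneg n
        linarith
      have : (0:ℝ) < k+4 := by
        have : (0:ℝ) ≤ k := Nat.cast_nonneg n
        linarith
      positivity
    have hmul : ((k+2+lam)*(k+4)) *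
        (lam * (gegenbauer (lam+1) (n+4) x - gegenbauer (lam+1) (n+2) x))
        = ((k+2+lam)*(k+4)) * ((k+4+lam) * gegenbauer lam (n+4) x) := by
      linear_combination ((k+2+lam)*lam)*e1 - (lam*(k+4+lam))*e2
        - ((k+2+lam)*(k+4+lam))*e3 + (2*(k+2+lam)*(k+4+lam)*x)*e4
        - ((k+4+lam)*(k+2+2*lam))*e5
    have h := mul_left_cancel₀ h2 hmul
    simp only [show n+2+2 = n+4 from rfl]
    push_cast
    linear_combination h

/-- Identity (II): `2λ x C_{n+1}^{(λ+1)} = (n+2) C_{n+2}^{(λ)} + 2λ C_n^{(λ+1)}`. -/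
lemma geg_idII (lam : ℝ) (hl : -(1/2:ℝ) < lam) : ∀ n : ℕ, ∀ x : ℝ,
    2*lam*x*gegenbauer (lam+1) (n+1) x
      = ((n:ℝ)+2) * gegenbauer lam (n+2) x + 2*lam*gegenbauer (lam+1) n x := by
  intro n
  induction n using Nat.twoStepInduction with
  | zero => intro x; simp [gegenbauer]; ring
  | one => intro x; simp [gegenbauer]; ring
  | more n ih0 ih1 =>
    intro x
    have f1 := geg_rec (lam+1) (n+1) x
    have f3 := geg_rec lam (n+2) x
    have f4 := ih1 x
    have f5 := ih0 x
    have f6 := geg_idIII lam hl n x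
    simp only [show n+2+2 = n+4 from rfl, show n+2+1 = n+3 from rfl,
      show n+1+2 = n+3 from rfl, show n+1+1 = n+2 from rfl] at f1 f3 f4
    push_cast at f1 f3 f4
    set k : ℝ := (n:ℝ) with hk
    have h2 : (k+3) ≠ 0 := by
      have : (0:ℝ) ≤ k := Nat.cast_nonneg n
      positivity
    have hmul : (k+3) * (2*lam*x*gegenbauer (lam+1) (n+3) x)
        = (k+3) * ((k+4) * gegenbauer lam (n+4) x + 2*lam*gegenbauer (lam+1) (n+2) x) := by
      linear_combination (2*lam*x)*f1 + (2*(k+3+lam)*x)*f4 + (k+3)*f5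
        - (k+3)*f3 - (2*(k+3))*f6
    have h := mul_left_cancel₀ h2 hmul
    simp only [show n+2+2 = n+4 from rfl, show n+2+1 = n+3 from rfl]
    push_cast
    linear_combination h

/-- Derivative: `(C_{n+1}^{(λ)})' = 2λ C_n^{(λ+1)}`. -/
lemma geg_deriv (lam : ℝ) (hl : -(1/2:ℝ) < lam) : ∀ n : ℕ, ∀ x : ℝ,
    HasDerivAt (gegenbauer lam (n+1)) (2*lam * gegenbauer (lam+1) n x) x := by
  intro n
  induction n using Nat.twoStepInduction with
  | zero =>
    intro x
    have h : HasDerivAt (fun y : ℝ => 2*lam*y) (2*lam) x := by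
      simpa using (hasDerivAt_id x).const_mul (2*lam)
    have hf : (fun y : ℝ => 2*lam*y) = gegenbauer lam 1 := rfl
    rw [hf] at h
    simpa [gegenbauer] using h
  | one =>
    intro x
    have hf : gegenbauer lam 2 = fun y : ℝ => 2*lam*(1+lam)*y^2 - lam := by
      funext y; simp [gegenbauer]; ring
    have h : HasDerivAt (fun y : ℝ => 2*lam*(1+lam)*y^2 - lam)
        (2*lam*(1+lam)*(2*x^1)) x := ((hasDerivAt_pow 2 x).const_mul (2*lam*(1+lam))).sub_const lam
    rw [hf]
    convert h using 1
    simp [gegenbauer]; ring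
  | more n ih0 ih1 =>
    intro x
    have hfun : gegenbauer lam (n+3) = fun y : ℝ =>
        (2 * ((n:ℝ)+2+lam) * y * gegenbauer lam (n+2) y
          - ((n:ℝ)+1+2*lam) * gegenbauer lam (n+1) y) / ((n:ℝ)+3) := by
      funext y
      rw [show gegenbauer lam (n+3) y = (2 * (((n+1:ℕ)) + 1 + lam) * y * gegenbauer lam (n + 2) y
        - (((n+1:ℕ)) + 2 * lam) * gegenbauer lam (n+1) y) / (((n+1:ℕ)) + 2) from rfl]
      push_cast; ring_nf
    have hd2 := ih1 x
    have hd1 := ih0 x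
    have e2 := geg_rec (lam+1) n x
    have f6 := geg_idIII lam hl n x
    have h3 : ((n:ℝ)+3) ≠ 0 := by positivity
    have h := ((((hasDerivAt_id x).const_mul (2*((n:ℝ)+2+lam))).mul hd2).sub
        (hd1.const_mul ((n:ℝ)+1+2*lam))).div_const ((n:ℝ)+3)
    have hval : 2*lam * gegenbauer (lam+1) (n+2) x
        = (2*((n:ℝ)+2+lam)*1*gegenbauer lam (n+2) x
            + 2*((n:ℝ)+2+lam)*x*(2*lam*gegenbauer (lam+1) (n+1) x)
            - ((n:ℝ)+1+2*lam)*(2*lam*gegenbauer (lam+1) n x)) / ((n:ℝ)+3) := by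
      rw [eq_div_iff h3]
      linear_combination (2*lam)*e2 + 2*f6
    rw [hfun, hval]
    exact h

end GegenbauerAux

theorem gegenbauer_xsquared_difference_identity (lam : ℝ)
    (hlam : lam ∈ Set.Ioo (-(1/2) : ℝ) 0 ∪ Set.Ioi (0 : ℝ)) (n : ℕ) :
    (∫ x in (0:ℝ)..1,
        (x ^ 2 * (gegenbauer (lam + 1) (n + 1) x) ^ 2 - (gegenbauer (lam + 1) n x) ^ 2)) =
    (((n : ℝ) + 2) / (4 * lam ^ 2))
      * ((gegenbauer lam (n + 2) 1) ^ 2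
          - ((n : ℝ) + 3) * (∫ x in (0:ℝ)..1, (gegenbauer lam (n + 2) x) ^ 2)) := by
  open GegenbauerAux in
  obtain ⟨hl, hne⟩ : -(1/2:ℝ) < lam ∧ lam ≠ 0 := by
    rcases hlam with ⟨h1, h2⟩ | h
    · exact ⟨h1, ne_of_lt h2⟩
    · exact ⟨by linarith [Set.mem_Ioi.mp h], ne_of_gt h⟩
  set k : ℝ := (n:ℝ) with hk
  set G : ℝ → ℝ := gegenbauer lam (n+2) with hG
  set A1 : ℝ → ℝ := gegenbauer (lam+1) (n+1) with hA1
  set A0 : ℝ → ℝ := gegenbauer (lam+1) n with hA0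
  have contG : Continuous G := GegenbauerAux.geg_cont lam (n+2)
  have contA1 : Continuous A1 := GegenbauerAux.geg_cont (lam+1) (n+1)
  have contA0 : Continuous A0 := GegenbauerAux.geg_cont (lam+1) n
  have hII : ∀ x : ℝ, 2*lam*x*A1 x = (k+2) * G x + 2*lam*A0 x :=
    fun x => GegenbauerAux.geg_idII lam hl n x
  -- FTC part
  have hFder : ∀ x ∈ Set.uIcc (0:ℝ) 1, HasDerivAt (fun y => y * (G y)^2)
      ((2*k+5)*(G x)^2 + 4*lam*(G x * A0 x)) x := by
    intro x _
    have hG' : HasDerivAt G (2*lam * A1 x) x := GegenbauerAux.geg_deriv lam hl (n+1) x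
    have h : HasDerivAt (fun y => y * (G y)^2) _ x := (hasDerivAt_id x).mul (hG'.pow 2)
    convert h using 1
    have := hII x
    simp only [id_eq]
    push_cast
    linear_combination (-2 * G x) * this
  have hcont1 : Continuous (fun x => (2*k+5)*(G x)^2 + 4*lam*(G x * A0 x)) := by fun_prop
  have hFTC : (∫ x in (0:ℝ)..1, ((2*k+5)*(G x)^2 + 4*lam*(G x * A0 x)))
      = (G 1)^2 := by
    rw [intervalIntegral.integral_eq_sub_of_hasDerivAt hFder
      (hcont1.intervalIntegrable 0 1)]
    simp
  have hIntG2 : IntervalIntegrable (fun x => (G x)^2) volume 0 1 := by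
    apply Continuous.intervalIntegrable; fun_prop
  have hIntGA0 : IntervalIntegrable (fun x => G x * A0 x) volume 0 1 := by
    apply Continuous.intervalIntegrable; fun_prop
  set I : ℝ := ∫ x in (0:ℝ)..1, (G x)^2 with hI
  set J : ℝ := ∫ x in (0:ℝ)..1, G x * A0 x with hJ
  have hsplit : (∫ x in (0:ℝ)..1, ((2*k+5)*(G x)^2 + 4*lam*(G x * A0 x)))
      = (2*k+5)*I + 4*lam*J := by
    rw [intervalIntegral.integral_add ((hIntG2.const_mul (2*k+5)))
      ((hIntGA0.const_mul (4*lam))),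
      intervalIntegral.integral_const_mul, intervalIntegral.integral_const_mul]
  have hG1 : (G 1)^2 = (2*k+5)*I + 4*lam*J := by rw [← hFTC, hsplit]
  -- LHS transformation
  have hLHS : (∫ x in (0:ℝ)..1, (x^2*(A1 x)^2 - (A0 x)^2))
      = ((k+2)^2/(4*lam^2))*I + ((k+2)/lam)*J := by
    have hcongr : (∫ x in (0:ℝ)..1, (x^2*(A1 x)^2 - (A0 x)^2))
        = ∫ x in (0:ℝ)..1, (((k+2)^2/(4*lam^2))*(G x)^2 + ((k+2)/lam)*(G x * A0 x)) := by
      apply intervalIntegral.integral_congr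
      intro x _
      have hIIx := hII x
      have key : 4*lam^2*(x^2*(A1 x)^2 - (A0 x)^2)
          = (k+2)^2*(G x)^2 + 4*lam*(k+2)*(G x * A0 x) := by
        linear_combination (2*lam*x*A1 x + (k+2)*G x + 2*lam*A0 x) * hIIx
      have h4 : (4:ℝ)*lam^2 ≠ 0 := by positivity
      have hrw : x^2*(A1 x)^2 - (A0 x)^2
          = ((k+2)^2*(G x)^2 + 4*lam*(k+2)*(G x * A0 x))/(4*lam^2) := by
        rw [eq_div_iff h4]; linear_combination key
      show x ^ 2 * A1 x ^ 2 - A0 x ^ 2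
        = (k + 2) ^ 2 / (4 * lam ^ 2) * G x ^ 2 + (k + 2) / lam * (G x * A0 x)
      rw [hrw]
      field_simp
    rw [hcongr, intervalIntegral.integral_add ((hIntG2.const_mul _))
      ((hIntGA0.const_mul _)),
      intervalIntegral.integral_const_mul, intervalIntegral.integral_const_mul]
  rw [hLHS, hG1]
  field_simp
  ring
end

section
/- Let λ > 0. Then there exist a constant C > 0 and N ∈ ℕ such that for all n ≥ N, |Γ(2λ)²·[C_n^{(λ)}(1)]² − n^{4λ−2} − 2λ(2λ−1)·n^{4λ−3}| ≤ C·n^{4λ−4}, where Γ is the gamma function. -/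
open Real MeasureTheory Finset

namespace GegAux

open Filter

noncomputable def fg (a : ℝ) (n : ℕ) : ℝ := Real.Gamma ((n : ℝ) + a) / (n.factorial : ℝ)

lemma fg_pos {a : ℝ} (ha : 0 < a) (n : ℕ) : 0 < fg a n :=
  div_pos (Real.Gamma_pos_of_pos (by positivity)) (by positivity)

lemma fg_succ {a : ℝ} (ha : 0 < a) (n : ℕ) :
    fg a (n + 1) = fg a n * (((n : ℝ) + a) / ((n : ℝ) + 1)) := by
  have hne : (n : ℝ) + a ≠ 0 := by positivity
  unfold fg
  rw [Nat.factorial_succ]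
  push_cast
  rw [show (n : ℝ) + 1 + a = ((n : ℝ) + a) + 1 by ring, Real.Gamma_add_one hne]
  have h1 : ((n : ℝ) + 1) ≠ 0 := by positivity
  have h2 : (n.factorial : ℝ) ≠ 0 := by positivity
  field_simp

lemma geg_one {lam : ℝ} (hlam : 0 < lam) (n : ℕ) :
    Real.Gamma (2 * lam) * gegenbauer lam n 1 = fg (2 * lam) n := by
  have ha : (0:ℝ) < 2 * lam := by linarith
  induction n using Nat.twoStepInduction with
  | zero => simp [gegenbauer, fg]
  | one =>
      show Real.Gamma (2 * lam) * (2 * lam * 1) = fg (2 * lam) 1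
      unfold fg
      push_cast
      rw [show (1:ℝ) + 2 * lam = 2 * lam + 1 by ring, Real.Gamma_add_one (ne_of_gt ha)]
      simp
      ring
  | more n ih ih1 =>
      have e1 := fg_succ ha n
      have e2 := fg_succ ha (n + 1)
      push_cast at e2
      show Real.Gamma (2 * lam) *
        ((2 * ((n : ℝ) + 1 + lam) * 1 * gegenbauer lam (n + 1) 1
          - ((n : ℝ) + 2 * lam) * gegenbauer lam n 1) / ((n : ℝ) + 2)) = fg (2 * lam) (n + 2)
      have hn1 : ((n : ℝ) + 1) ≠ 0 := by positivity
      have hn2 : ((n : ℝ) + 2) ≠ 0 := by positivity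
      rw [show fg (2 * lam) (n + 2) = fg (2 * lam) (n + 1 + 1) by norm_num, e2, e1]
      linear_combination (norm := (field_simp; ring)) ((2 * ((n : ℝ) + 1 + lam)) / ((n : ℝ) + 2)) * ih1
        + ((2 * ((n : ℝ) + 1 + lam)) / ((n : ℝ) + 2)) * e1
        - (((n : ℝ) + 2 * lam) / ((n : ℝ) + 2)) * ih


lemma log_quad {z : ℝ} (hz : |z| ≤ 1/2) : |Real.log (1+z) - z + z^2/2| ≤ 2*|z|^3 := by
  have h1 : |(-z)| < 1 := by rw [abs_neg]; linarith [abs_nonneg z]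
  have h := Real.abs_log_sub_add_sum_range_le h1 2
  have hs : (∑ i ∈ Finset.range 2, (-z) ^ (i + 1) / (i + 1)) = -z + z^2/2 := by
    simp [Finset.sum_range_succ]
    ring
  rw [hs] at h
  have h2 : (1 : ℝ) - (-z) = 1 + z := by ring
  rw [h2] at h
  have h3 : |Real.log (1+z) - z + z^2/2| = |-z + z^2/2 + Real.log (1+z)| := by
    ring_nf
  rw [h3]
  rw [abs_neg] at h
  refine le_trans h ?_
  have h4 : (1:ℝ)/2 ≤ 1 - |z| := by linarith
  have h5 : |z| ^ (2+1) / (1 - |z|) ≤ |z| ^ (2+1) / (1/2) := by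
    apply div_le_div_of_nonneg_left (by positivity) (by norm_num) h4
  refine le_trans h5 (le_of_eq ?_)
  ring

lemma telescope_bound {v F : ℕ → ℝ} {N : ℕ} (hv : Filter.Tendsto v atTop (nhds 0))
    (hF : ∀ k, N ≤ k → 0 ≤ F k)
    (hd : ∀ k, N ≤ k → |v (k+1) - v k| ≤ F k - F (k+1)) :
    ∀ m, N ≤ m → |v m| ≤ F m := by
  intro m hm
  have key : ∀ n, m ≤ n → |v m - v n| ≤ F m - F n := by
    intro n hn
    induction n, hn using Nat.le_induction with
    | base => simp
    | succ n hn ih =>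
        have h2 : N ≤ n := le_trans hm hn
        calc |v m - v (n+1)| = |(v m - v n) + (v n - v (n+1))| := by ring_nf
          _ ≤ |v m - v n| + |v n - v (n+1)| := abs_add_le _ _
          _ ≤ (F m - F n) + (F n - F (n+1)) := by
              refine add_le_add ih ?_
              rw [abs_sub_comm]
              exact hd n h2
          _ = F m - F (n+1) := by ring
  have key2 : ∀ n, m ≤ n → |v m| ≤ |v n| + F m := by
    intro n hn
    have h1 := key n hn
    have h3 : 0 ≤ F n := hF n (le_trans hm hn)
    calc |v m| = |v n + (v m - v n)| := by ring_nf
      _ ≤ |v n| + |v m - v n| := abs_add_le _ _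
      _ ≤ |v n| + (F m - F n) := by linarith
      _ ≤ |v n| + F m := by linarith
  have hlim : Filter.Tendsto (fun n => |v n| + F m) atTop (nhds (0 + F m)) := by
    have h4 : Filter.Tendsto (fun n => |v n|) atTop (nhds 0) := by
      have := hv.abs
      simpa using this
    exact h4.add tendsto_const_nhds
  have h5 := ge_of_tendsto hlim ((eventually_ge_atTop m).mono key2)
  simpa using h5


noncomputable def sf (a : ℝ) (n : ℕ) : ℝ := (fg a n)^2 * (n:ℝ) ^ (2 - 2*a)

noncomputable def rh (a : ℝ) (n : ℕ) : ℝ :=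
  (((n:ℝ) + a)/((n:ℝ)+1))^2 * (((n:ℝ)+1)/(n:ℝ)) ^ (2-2*a)

lemma sf_succ {a : ℝ} (ha : 0 < a) {n : ℕ} (hn : 1 ≤ n) :
    sf a (n+1) = sf a n * rh a n := by
  have hnp : (0:ℝ) < (n:ℝ) := by exact_mod_cast hn
  have key : ((n:ℝ)+1) ^ (2-2*a) = (((n:ℝ)+1)/(n:ℝ)) ^ (2-2*a) * (n:ℝ) ^ (2-2*a) := by
    rw [← Real.mul_rpow (by positivity) (by positivity),
      div_mul_cancel₀ _ (ne_of_gt hnp)]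
  unfold sf rh
  rw [fg_succ ha n]
  push_cast
  rw [key]
  ring

lemma gamma_prod {a : ℝ} (ha : 0 < a) (n : ℕ) :
    Real.Gamma (a + n + 1) = Real.Gamma a * ∏ j ∈ Finset.range (n+1), (a + j) := by
  induction n with
  | zero =>
      simp [Real.Gamma_add_one (ne_of_gt ha)]
      ring
  | succ n ih =>
      have hne : a + (n:ℝ) + 1 ≠ 0 := by positivity
      have h0 : a + ((n:ℕ)+1 : ℕ) + 1 = (a + (n:ℝ) + 1) + 1 := by push_cast; ring
      rw [show n + 1 + 1 = (n+1) + 1 from rfl, Finset.prod_range_succ _ (n+1),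
        h0, Real.Gamma_add_one hne, ih]
      push_cast
      ring

lemma tendsto_sf {a : ℝ} (ha : 0 < a) : Filter.Tendsto (sf a) atTop (nhds 1) := by
  have hΓ : Real.Gamma a ≠ 0 := ne_of_gt (Real.Gamma_pos_of_pos ha)
  have hfg : ∀ n : ℕ, 1 ≤ n → fg a n * (n:ℝ)^(1-a)
      = (Real.Gamma a / Real.GammaSeq a n) * ((n:ℝ)/((n:ℝ)+a)) := by
    intro n hn
    have hnp : (0:ℝ) < (n:ℝ) := by exact_mod_cast hn
    have hna : (0:ℝ) < (n:ℝ) + a := by positivity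
    have hprod : (∏ j ∈ Finset.range (n+1), (a + (j:ℝ)))
        = Real.Gamma (a + n + 1) / Real.Gamma a := by
      rw [gamma_prod ha n]
      field_simp
    unfold Real.GammaSeq
    rw [hprod]
    have hg1 : Real.Gamma (a + n + 1) = ((n:ℝ) + a) * Real.Gamma ((n:ℝ) + a) := by
      rw [show a + (n:ℝ) + 1 = ((n:ℝ) + a) + 1 by ring, Real.Gamma_add_one (ne_of_gt hna)]
    rw [hg1]
    have hpow : (n:ℝ)^(1-a) = (n:ℝ) / (n:ℝ)^a := by
      rw [Real.rpow_sub hnp, Real.rpow_one]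
    unfold fg
    rw [hpow]
    have h2 : (n.factorial : ℝ) ≠ 0 := by positivity
    have h3 : (n:ℝ)^a ≠ 0 := ne_of_gt (Real.rpow_pos_of_pos hnp a)
    field_simp
  have t1 : Filter.Tendsto (fun n => Real.Gamma a / Real.GammaSeq a n) atTop
      (nhds (Real.Gamma a / Real.Gamma a)) :=
    Filter.Tendsto.div tendsto_const_nhds (Real.GammaSeq_tendsto_Gamma a) hΓ
  rw [div_self hΓ] at t1
  have t2 : Filter.Tendsto (fun n : ℕ => (n:ℝ)/((n:ℝ)+a)) atTop (nhds 1) := by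
    have h0 : Filter.Tendsto (fun n : ℕ => a/((n:ℝ)+a)) atTop (nhds 0) := by
      apply Filter.Tendsto.div_atTop tendsto_const_nhds
      exact Filter.tendsto_atTop_add_const_right _ a tendsto_natCast_atTop_atTop
    have h1 : Filter.Tendsto (fun n : ℕ => 1 - a/((n:ℝ)+a)) atTop (nhds (1 - 0)) :=
      Filter.Tendsto.sub tendsto_const_nhds h0
    rw [sub_zero] at h1
    apply h1.congr'
    filter_upwards [eventually_ge_atTop 1] with n hn
    have hnp : (0:ℝ) < (n:ℝ) := by exact_mod_cast hn
    have hna : ((n:ℝ) + a) ≠ 0 := by positivity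
    field_simp
    ring
  have t3 : Filter.Tendsto
      (fun n : ℕ => ((Real.Gamma a / Real.GammaSeq a n) * ((n:ℝ)/((n:ℝ)+a)))^2)
      atTop (nhds 1) := by
    have := (t1.mul t2).pow 2
    simpa using this
  apply t3.congr'
  filter_upwards [eventually_ge_atTop 1] with n hn
  have hnp : (0:ℝ) < (n:ℝ) := by exact_mod_cast hn
  rw [← hfg n hn]
  have hsq : ((n:ℝ)^(1-a))^2 = (n:ℝ)^(2-2*a) := by
    rw [← Real.rpow_natCast ((n:ℝ)^(1-a)) 2, ← Real.rpow_mul (le_of_lt hnp)]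
    norm_num
    rw [show (1-a)*2 = 2-2*a by ring]
  unfold sf
  rw [mul_pow, hsq]


set_option maxHeartbeats 4000000 in
lemma rho_est {a : ℝ} (ha : 0 < a) : ∃ (K : ℝ) (N : ℕ), 0 < K ∧ ∀ n : ℕ, N ≤ n →
    |rh a n - 1 + a*(a-1)/(n:ℝ)^2| ≤ K/(n:ℝ)^3 ∧ |rh a n - 1| ≤ K/(n:ℝ)^2 := by
  have hc0 : (0:ℝ) ≤ |a-1| := abs_nonneg _
  set c := |a-1| with hcdef
  set b := a*(a-1) with hbdef
  set KA : ℝ := 4*c^3 + 4*c with hKAdef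
  set KB : ℝ := c*(3*a+1) with hKBdef
  set KC : ℝ := KA + KB with hKCdef
  set KD : ℝ := KC + |b| with hKDdef
  have hKA0 : 0 ≤ KA := by positivity
  have hKB0 : 0 ≤ KB := by positivity
  have hKC0 : 0 ≤ KC := by positivity
  have hKD0 : 0 ≤ KD := by positivity
  refine ⟨KD^2 + KC + |b| + 1, ⌈(2:ℝ) + 2*c + KD⌉₊, by positivity, ?_⟩
  intro n hn
  have hx : (2:ℝ) + 2*c + KD ≤ (n:ℝ) := by
    refine le_trans (Nat.le_ceil _) ?_
    exact_mod_cast hn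
  have hn2 : (2:ℝ) ≤ (n:ℝ) := by linarith
  have hnc : 2*c ≤ (n:ℝ) := by linarith
  have hnKD : KD ≤ (n:ℝ) := by linarith
  have hnp : (0:ℝ) < (n:ℝ) := by linarith
  have hnp1 : (0:ℝ) < (n:ℝ) + 1 := by linarith
  set z1 : ℝ := (a-1)/((n:ℝ)+1) with hz1def
  set z2 : ℝ := 1/(n:ℝ) with hz2def
  have habs1 : |z1| = c/((n:ℝ)+1) := by
    rw [hz1def, abs_div, abs_of_pos hnp1]
  have habs2 : |z2| = 1/(n:ℝ) := by
    rw [hz2def, abs_div, abs_of_pos hnp, abs_one]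
  have hz1 : |z1| ≤ 1/2 := by
    rw [habs1, div_le_iff₀ hnp1]; linarith
  have hz2 : |z2| ≤ 1/2 := by
    rw [habs2, div_le_iff₀ hnp]; linarith
  have hz1b : |z1| ≤ c/(n:ℝ) := by
    rw [habs1]
    exact div_le_div_of_nonneg_left hc0 hnp (by linarith)
  set L : ℝ := 2 * Real.log (1+z1) + (2-2*a) * Real.log (1+z2) with hLdef
  set M : ℝ := 2*(z1 - z1^2/2) + (2-2*a)*(z2 - z2^2/2) with hMdef
  have e1 : ((n:ℝ)+a)/((n:ℝ)+1) = 1 + z1 := by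
    rw [hz1def]; field_simp; ring
  have e2 : ((n:ℝ)+1)/(n:ℝ) = 1 + z2 := by
    rw [hz2def]; field_simp
  have p1 : (0:ℝ) < 1 + z1 := by
    rw [← e1]; positivity
  have p2 : (0:ℝ) < 1 + z2 := by
    rw [← e2]; positivity
  have hrh : rh a n = Real.exp L := by
    unfold rh
    rw [e1, e2, Real.rpow_def_of_pos p2,
      show (1+z1)^2 = Real.exp (2 * Real.log (1+z1)) by
        rw [two_mul, Real.exp_add, Real.exp_log p1]; ring,
      ← Real.exp_add]
    congr 1
    rw [hLdef]; ring
  -- |L - M| ≤ KA / n^3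
  have hl1 := log_quad hz1
  have hl2 := log_quad hz2
  have hcube1 : |z1|^3 ≤ c^3/(n:ℝ)^3 := by
    have := pow_le_pow_left₀ (abs_nonneg z1) hz1b 3
    rw [div_pow] at this
    linarith
  have hcube2 : |z2|^3 ≤ 1/(n:ℝ)^3 := by
    rw [habs2, div_pow, one_pow]
  have h2c : |2-2*a| = 2*c := by
    rw [show (2-2*a) = -(2*(a-1)) by ring, abs_neg, abs_mul, hcdef]
    norm_num
  have hLM : |L - M| ≤ KA/(n:ℝ)^3 := by
    have hrw : L - M = 2*(Real.log (1+z1) - z1 + z1^2/2)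
        + (2-2*a)*(Real.log (1+z2) - z2 + z2^2/2) := by
      rw [hLdef, hMdef]; ring
    rw [hrw]
    calc |2*(Real.log (1+z1) - z1 + z1^2/2) + (2-2*a)*(Real.log (1+z2) - z2 + z2^2/2)|
        ≤ |2*(Real.log (1+z1) - z1 + z1^2/2)| + |(2-2*a)*(Real.log (1+z2) - z2 + z2^2/2)| :=
          abs_add_le _ _
      _ = 2*|Real.log (1+z1) - z1 + z1^2/2| + 2*c*|Real.log (1+z2) - z2 + z2^2/2| := by
          rw [abs_mul, abs_mul, h2c]
          norm_num
      _ ≤ 2*(2*|z1|^3) + 2*c*(2*|z2|^3) := by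
          gcongr
      _ ≤ 2*(2*(c^3/(n:ℝ)^3)) + 2*c*(2*(1/(n:ℝ)^3)) := by
          gcongr
      _ = KA/(n:ℝ)^3 := by
          rw [hKAdef]; field_simp; ring
  -- |M + b/n^2| ≤ KB / n^3
  have hM : M + b/(n:ℝ)^2 = (a-1)*(2*a*(n:ℝ) + a + 1)/((n:ℝ)^2*((n:ℝ)+1)^2) := by
    rw [hMdef, hz1def, hz2def, hbdef]
    field_simp
    ring
  have hMb : |M + b/(n:ℝ)^2| ≤ KB/(n:ℝ)^3 := by
    rw [hM, abs_div]
    have hnum : |(a-1)*(2*a*(n:ℝ) + a + 1)| ≤ KB*(n:ℝ) := by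
      rw [abs_mul, ← hcdef]
      have hpos : (0:ℝ) < 2*a*(n:ℝ) + a + 1 := by positivity
      rw [abs_of_pos hpos, hKBdef]
      have h9 : 2*a*(n:ℝ) + a + 1 ≤ (3*a+1)*(n:ℝ) := by
        have h10 : a + 1 ≤ (a+1)*(n:ℝ) := by
          have := mul_le_mul_of_nonneg_left hn2 (by positivity : (0:ℝ) ≤ (a+1)/2)
          calc a + 1 ≤ (a+1)/2 * 2 := by linarith
            _ ≤ (a+1)/2 * (n:ℝ) := by
                apply mul_le_mul_of_nonneg_left hn2 (by positivity)
            _ ≤ (a+1)*(n:ℝ) := by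
                apply mul_le_mul_of_nonneg_right _ (by linarith)
                linarith
        linarith
      calc c * (2*a*(n:ℝ) + a + 1) ≤ c * ((3*a+1)*(n:ℝ)) :=
            mul_le_mul_of_nonneg_left h9 hc0
        _ = c*(3*a+1)*(n:ℝ) := by ring
    have hden : (n:ℝ)^4 ≤ |(n:ℝ)^2*((n:ℝ)+1)^2| := by
      rw [abs_of_pos (by positivity)]
      have h11 : (n:ℝ)^2 ≤ ((n:ℝ)+1)^2 := by
        apply pow_le_pow_left₀ (by linarith) (by linarith)
      calc (n:ℝ)^4 = (n:ℝ)^2 * (n:ℝ)^2 := by ring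
        _ ≤ (n:ℝ)^2 * ((n:ℝ)+1)^2 := by
            apply mul_le_mul_of_nonneg_left h11 (by positivity)
    calc |(a-1)*(2*a*(n:ℝ) + a + 1)| / |(n:ℝ)^2*((n:ℝ)+1)^2|
        ≤ KB*(n:ℝ) / (n:ℝ)^4 := by
          apply div_le_div₀ (by positivity) hnum (by positivity) hden
      _ = KB/(n:ℝ)^3 := by
          field_simp
  have hLb : |L + b/(n:ℝ)^2| ≤ KC/(n:ℝ)^3 := by
    have : L + b/(n:ℝ)^2 = (L - M) + (M + b/(n:ℝ)^2) := by ring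
    rw [this, hKCdef]
    calc |(L - M) + (M + b/(n:ℝ)^2)| ≤ |L - M| + |M + b/(n:ℝ)^2| := abs_add_le _ _
      _ ≤ KA/(n:ℝ)^3 + KB/(n:ℝ)^3 := add_le_add hLM hMb
      _ = (KA + KB)/(n:ℝ)^3 := by ring
  have habsb : |b/(n:ℝ)^2| = |b|/(n:ℝ)^2 := by
    rw [abs_div, abs_of_pos (by positivity : (0:ℝ) < (n:ℝ)^2)]
  have hpow23 : (n:ℝ)^2 ≤ (n:ℝ)^3 :=
    pow_le_pow_right₀ (by linarith : (1:ℝ) ≤ (n:ℝ)) (by norm_num)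
  have hpow34 : (n:ℝ)^3 ≤ (n:ℝ)^4 :=
    pow_le_pow_right₀ (by linarith : (1:ℝ) ≤ (n:ℝ)) (by norm_num)
  have h32 : KC/(n:ℝ)^3 ≤ KC/(n:ℝ)^2 := by
    apply div_le_div_of_nonneg_left hKC0 (by positivity) hpow23
  have hLa : |L| ≤ KD/(n:ℝ)^2 := by
    have : L = (L + b/(n:ℝ)^2) - b/(n:ℝ)^2 := by ring
    rw [this, hKDdef]
    calc |(L + b/(n:ℝ)^2) - b/(n:ℝ)^2| ≤ |L + b/(n:ℝ)^2| + |b/(n:ℝ)^2| := abs_sub _ _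
      _ ≤ KC/(n:ℝ)^2 + |b|/(n:ℝ)^2 := by
          rw [habsb]
          exact add_le_add (le_trans hLb h32) (le_refl _)
      _ = (KC + |b|)/(n:ℝ)^2 := by ring
  have hL1 : |L| ≤ 1 := by
    refine le_trans hLa ?_
    rw [div_le_one (by positivity)]
    exact le_trans hnKD (le_self_pow₀ (by linarith) (by norm_num))
  have hexp : |Real.exp L - 1 - L| ≤ L^2 := Real.abs_exp_sub_one_sub_id_le hL1
  have hL2 : L^2 ≤ KD^2/(n:ℝ)^3 := by
    have h1 : L^2 = |L|^2 := (sq_abs L).symm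
    have h2 : |L|^2 ≤ (KD/(n:ℝ)^2)^2 := pow_le_pow_left₀ (abs_nonneg L) hLa 2
    have h3 : (KD/(n:ℝ)^2)^2 = KD^2/(n:ℝ)^4 := by rw [div_pow]; ring_nf
    have h4 : KD^2/(n:ℝ)^4 ≤ KD^2/(n:ℝ)^3 := by
      apply div_le_div_of_nonneg_left (by positivity) (by positivity) hpow34
    linarith [h1 ▸ h2, h3 ▸ h2]
  constructor
  · have hrw : rh a n - 1 + b/(n:ℝ)^2 = (Real.exp L - 1 - L) + (L + b/(n:ℝ)^2) := by
      rw [hrh]; ring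
    rw [hrw]
    calc |(Real.exp L - 1 - L) + (L + b/(n:ℝ)^2)|
        ≤ |Real.exp L - 1 - L| + |L + b/(n:ℝ)^2| := abs_add_le _ _
      _ ≤ KD^2/(n:ℝ)^3 + KC/(n:ℝ)^3 := add_le_add (le_trans hexp hL2) hLb
      _ ≤ (KD^2 + KC + |b| + 1)/(n:ℝ)^3 := by
          rw [← add_div]
          exact (div_le_div_iff_of_pos_right (by positivity : (0:ℝ) < (n:ℝ)^3)).mpr
            (by linarith [abs_nonneg b])
  · have hrw : rh a n - 1 = ((Real.exp L - 1 - L) + (L + b/(n:ℝ)^2)) - b/(n:ℝ)^2 := by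
      rw [hrh]; ring
    rw [hrw]
    calc |((Real.exp L - 1 - L) + (L + b/(n:ℝ)^2)) - b/(n:ℝ)^2|
        ≤ |Real.exp L - 1 - L| + |L + b/(n:ℝ)^2| + |b/(n:ℝ)^2| := by
          refine le_trans (abs_sub _ _) ?_
          exact add_le_add_left (abs_add_le _ _) _
      _ ≤ KD^2/(n:ℝ)^3 + KC/(n:ℝ)^3 + |b|/(n:ℝ)^2 := by
          rw [habsb]
          exact add_le_add (add_le_add (le_trans hexp hL2) hLb) (le_refl _)
      _ ≤ (KD^2 + KC + |b| + 1)/(n:ℝ)^2 := by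
          have h5 : (0:ℝ) < (n:ℝ)^2 := by positivity
          have h6 : KD^2/(n:ℝ)^3 ≤ KD^2/(n:ℝ)^2 := by
            apply div_le_div_of_nonneg_left (by positivity) (by positivity) hpow23
          have h7 : KC/(n:ℝ)^3 ≤ KC/(n:ℝ)^2 := h32
          have h8 : (KD^2 + KC + |b|)/(n:ℝ)^2 ≤ (KD^2 + KC + |b| + 1)/(n:ℝ)^2 :=
            (div_le_div_iff_of_pos_right (by positivity : (0:ℝ) < (n:ℝ)^2)).mpr (by linarith)
          calc KD^2/(n:ℝ)^3 + KC/(n:ℝ)^3 + |b|/(n:ℝ)^2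
              ≤ KD^2/(n:ℝ)^2 + KC/(n:ℝ)^2 + |b|/(n:ℝ)^2 := by linarith
            _ = (KD^2 + KC + |b|)/(n:ℝ)^2 := by ring
            _ ≤ (KD^2 + KC + |b| + 1)/(n:ℝ)^2 := h8


lemma aux2 {x : ℝ} (hx : 2 ≤ x) : 1/x^2 ≤ 1/(x-1) - 1/x := by
  have h1 : (0:ℝ) < x := by linarith
  have h2 : (0:ℝ) < x - 1 := by linarith
  have key : 1/(x-1) - 1/x = 1/((x-1)*x) := by
    field_simp
    ring
  rw [key]
  exact div_le_div_of_nonneg_left (by norm_num) (mul_pos h2 h1) (by nlinarith)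

lemma aux3 {x : ℝ} (hx : 2 ≤ x) : 1/x^3 ≤ 1/(x-1)^2 - 1/x^2 := by
  have h1 : (0:ℝ) < x := by linarith
  have h2 : (0:ℝ) < x - 1 := by linarith
  have key : 1/(x-1)^2 - 1/x^2 = (2*x-1)/((x-1)^2*x^2) := by
    field_simp
    ring
  rw [key, div_le_div_iff₀ (by positivity) (mul_pos (pow_pos h2 2) (pow_pos h1 2))]
  nlinarith

lemma aux4a {x : ℝ} (hx : 2 ≤ x) : 1/(x-1) ≤ 2/x := by
  rw [div_le_div_iff₀ (by linarith) (by linarith)]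
  linarith

lemma aux4b {x : ℝ} (hx : 2 ≤ x) : 1/(x-1)^2 ≤ 4/x^2 := by
  rw [div_le_div_iff₀ (by nlinarith) (by nlinarith)]
  nlinarith

set_option maxHeartbeats 4000000 in
lemma main_est {a : ℝ} (ha : 0 < a) :
    ∃ (C : ℝ) (N : ℕ), 0 < C ∧ ∀ n : ℕ, N ≤ n →
      |(fg a n)^2 - (n:ℝ)^(2*a-2) - a*(a-1)*(n:ℝ)^(2*a-3)| ≤ C * (n:ℝ)^(2*a-4) := by
  obtain ⟨K, N₁, hK, hrho⟩ := rho_est ha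
  set b : ℝ := a*(a-1) with hbdef
  set v : ℕ → ℝ := fun n => sf a n - 1 - b/(n:ℝ) with hvdef
  have hv0 : Filter.Tendsto v atTop (nhds 0) := by
    have h1 : Filter.Tendsto (fun n : ℕ => b/(n:ℝ)) atTop (nhds 0) :=
      Filter.Tendsto.div_atTop tendsto_const_nhds tendsto_natCast_atTop_atTop
    have h2 := ((tendsto_sf ha).sub (tendsto_const_nhds (x := (1:ℝ)))).sub h1
    simpa using h2
  have habs0 : Filter.Tendsto (fun n => |v n|) atTop (nhds 0) := by
    simpa using hv0.abs
  obtain ⟨N₂, hN₂⟩ := eventually_atTop.mp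
    (habs0.eventually_lt_const (by norm_num : (0:ℝ) < 1))
  set N₃ : ℕ := max (max N₁ N₂) 2 with hN₃def
  have hN₃1 : N₁ ≤ N₃ := le_trans (le_max_left _ _) (le_max_left _ _)
  have hN₃2 : N₂ ≤ N₃ := le_trans (le_max_right _ _) (le_max_left _ _)
  have hN₃3 : 2 ≤ N₃ := le_max_right _ _
  -- basic facts for n ≥ N₃
  have hbasic : ∀ n : ℕ, N₃ ≤ n → (2:ℝ) ≤ (n:ℝ) ∧ (0:ℝ) < (n:ℝ) ∧ |v n| ≤ 1 := by
    intro n hn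
    have h2 : (2:ℝ) ≤ (n:ℝ) := by exact_mod_cast le_trans hN₃3 hn
    exact ⟨h2, by linarith, le_of_lt (hN₂ n (le_trans hN₃2 hn))⟩
  -- the one-step difference identity
  have hdv : ∀ n : ℕ, N₃ ≤ n →
      v (n+1) - v n = sf a n * (rh a n - 1) + b*(1/(n:ℝ) - 1/((n:ℝ)+1)) := by
    intro n hn
    obtain ⟨h2, hp, _⟩ := hbasic n hn
    have hn1 : 1 ≤ n := by omega
    have hsucc := sf_succ ha hn1
    rw [hvdef]
    simp only
    rw [hsucc]
    push_cast
    have hne : (n:ℝ) ≠ 0 := by linarith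
    have hne1 : (n:ℝ) + 1 ≠ 0 := by linarith
    field_simp
    ring
  -- |sf n| ≤ 2 + |b| for n ≥ N₃
  have hsf_bd : ∀ n : ℕ, N₃ ≤ n → |sf a n| ≤ 2 + |b| := by
    intro n hn
    obtain ⟨h2, hp, hv1⟩ := hbasic n hn
    have hsf : sf a n = 1 + b/(n:ℝ) + v n := by rw [hvdef]; simp only; ring
    have hb : |b/(n:ℝ)| ≤ |b| := by
      rw [abs_div, abs_of_pos hp]
      apply div_le_self (abs_nonneg b) (by linarith)
    calc |sf a n| = |1 + b/(n:ℝ) + v n| := by rw [hsf]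
      _ ≤ |(1:ℝ)| + |b/(n:ℝ)| + |v n| := by
          refine le_trans (abs_add_le _ _) ?_
          exact add_le_add_left (abs_add_le _ _) _
      _ ≤ 1 + |b| + 1 := by
          rw [abs_one]
          exact add_le_add (by linarith) hv1
      _ = 2 + |b| := by ring
  set K₂ : ℝ := (2+|b|)*K + |b| with hK₂def
  have hK₂0 : 0 ≤ K₂ := by positivity
  -- round 1: |Δv| ≤ K₂ / n²
  have hdv1 : ∀ n : ℕ, N₃ ≤ n → |v (n+1) - v n| ≤ K₂/(n:ℝ)^2 := by
    intro n hn
    obtain ⟨h2, hp, _⟩ := hbasic n hn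
    rw [hdv n hn]
    have h3 := (hrho n (le_trans hN₃1 hn)).2
    have h4 : |sf a n * (rh a n - 1)| ≤ (2+|b|) * (K/(n:ℝ)^2) := by
      rw [abs_mul]
      apply mul_le_mul (hsf_bd n hn) h3 (abs_nonneg _) (by positivity)
    have h5 : |b*(1/(n:ℝ) - 1/((n:ℝ)+1))| ≤ |b|/(n:ℝ)^2 := by
      have he : 1/(n:ℝ) - 1/((n:ℝ)+1) = 1/((n:ℝ)*((n:ℝ)+1)) := by
        rw [div_sub_div _ _ (ne_of_gt hp) (ne_of_gt (by linarith : (0:ℝ) < (n:ℝ)+1))]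
        norm_num
      rw [he, abs_mul, abs_div, abs_one,
        abs_of_pos (by positivity : (0:ℝ) < (n:ℝ)*((n:ℝ)+1)), mul_one_div]
      have hns : (n:ℝ)^2 ≤ (n:ℝ)*((n:ℝ)+1) := by
        have h6 := mul_le_mul_of_nonneg_left (by linarith : (n:ℝ) ≤ (n:ℝ)+1) (le_of_lt hp)
        calc (n:ℝ)^2 = (n:ℝ)*(n:ℝ) := pow_two _
          _ ≤ (n:ℝ)*((n:ℝ)+1) := h6
      exact div_le_div_of_nonneg_left (abs_nonneg b) (by positivity) hns
    calc |sf a n * (rh a n - 1) + b*(1/(n:ℝ) - 1/((n:ℝ)+1))|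
        ≤ |sf a n * (rh a n - 1)| + |b*(1/(n:ℝ) - 1/((n:ℝ)+1))| := abs_add_le _ _
      _ ≤ (2+|b|) * (K/(n:ℝ)^2) + |b|/(n:ℝ)^2 := add_le_add h4 h5
      _ = K₂/(n:ℝ)^2 := by rw [hK₂def]; field_simp
  -- round 1 telescope: |v m| ≤ 2 K₂ / m
  have hv1 : ∀ m : ℕ, N₃ ≤ m → |v m| ≤ 2*K₂/(m:ℝ) := by
    have hF1 : ∀ k, N₃ ≤ k → 0 ≤ K₂/((k:ℝ)-1) := by
      intro k hk
      obtain ⟨h2, hp, _⟩ := hbasic k hk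
      exact div_nonneg hK₂0 (by linarith)
    have hd1 : ∀ k, N₃ ≤ k → |v (k+1) - v k| ≤ K₂/((k:ℝ)-1) - K₂/(((k+1:ℕ):ℝ)-1) := by
      intro k hk
      obtain ⟨h2, hp, _⟩ := hbasic k hk
      refine le_trans (hdv1 k hk) ?_
      push_cast
      have h8 := aux2 h2
      have h7 : K₂ * (1/(k:ℝ)^2) ≤ K₂ * (1/((k:ℝ)-1) - 1/(k:ℝ)) :=
        mul_le_mul_of_nonneg_left h8 hK₂0
      calc K₂/(k:ℝ)^2 = K₂ * (1/(k:ℝ)^2) := by ring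
        _ ≤ K₂ * (1/((k:ℝ)-1) - 1/(k:ℝ)) := h7
        _ = K₂/((k:ℝ)-1) - K₂/((k:ℝ)+1-1) := by
            rw [show (k:ℝ)+1-1 = (k:ℝ) by ring]
            ring
    have htb := telescope_bound (v := v) (F := fun k => K₂/((k:ℝ)-1)) hv0 hF1 hd1
    intro m hm
    obtain ⟨h2, hp, _⟩ := hbasic m hm
    refine le_trans (htb m hm) ?_
    have h9 := aux4a h2
    calc K₂/((m:ℝ)-1) = K₂ * (1/((m:ℝ)-1)) := by ring
      _ ≤ K₂ * (2/(m:ℝ)) := mul_le_mul_of_nonneg_left h9 hK₂0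
      _ = 2*K₂/(m:ℝ) := by ring
  set K₃ : ℝ := (|b| + 2*K₂)*K + K + |b| with hK₃def
  have hK₃0 : 0 ≤ K₃ := by positivity
  -- round 2: |Δv| ≤ K₃ / n³
  have hdv2 : ∀ n : ℕ, N₃ ≤ n → |v (n+1) - v n| ≤ K₃/(n:ℝ)^3 := by
    intro n hn
    obtain ⟨h2, hp, _⟩ := hbasic n hn
    have hsplit : v (n+1) - v n = (sf a n - 1)*(rh a n - 1)
        + (rh a n - 1 + b/(n:ℝ)^2) + b*(1/(n:ℝ) - 1/((n:ℝ)+1) - 1/(n:ℝ)^2) := by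
      rw [hdv n hn]; ring
    have ⟨hr1, hr2⟩ := hrho n (le_trans hN₃1 hn)
    have hsf1 : |sf a n - 1| ≤ (|b| + 2*K₂)/(n:ℝ) := by
      have hid : sf a n - 1 = b/(n:ℝ) + v n := by rw [hvdef]; simp only; ring
      rw [hid]
      calc |b/(n:ℝ) + v n| ≤ |b/(n:ℝ)| + |v n| := abs_add_le _ _
        _ ≤ |b|/(n:ℝ) + 2*K₂/(n:ℝ) := by
            refine add_le_add ?_ (hv1 n hn)
            rw [abs_div, abs_of_pos hp]
        _ = (|b| + 2*K₂)/(n:ℝ) := by ring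
    have hterm1 : |(sf a n - 1)*(rh a n - 1)| ≤ (|b| + 2*K₂)*K/(n:ℝ)^3 := by
      rw [abs_mul]
      calc |sf a n - 1| * |rh a n - 1| ≤ ((|b| + 2*K₂)/(n:ℝ)) * (K/(n:ℝ)^2) :=
            mul_le_mul hsf1 hr2 (abs_nonneg _) (by positivity)
        _ = (|b| + 2*K₂)*K/(n:ℝ)^3 := by field_simp
    have hterm3 : |b*(1/(n:ℝ) - 1/((n:ℝ)+1) - 1/(n:ℝ)^2)| ≤ |b|/(n:ℝ)^3 := by
      have he : 1/(n:ℝ) - 1/((n:ℝ)+1) - 1/(n:ℝ)^2 = -(1/((n:ℝ)^2*((n:ℝ)+1))) := by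
        field_simp
        ring
      rw [he, abs_mul, abs_neg, abs_div, abs_one,
        abs_of_pos (by positivity : (0:ℝ) < (n:ℝ)^2*((n:ℝ)+1)), mul_one_div]
      have hns : (n:ℝ)^3 ≤ (n:ℝ)^2*((n:ℝ)+1) := by
        have h6 := mul_le_mul_of_nonneg_left (by linarith : (n:ℝ) ≤ (n:ℝ)+1)
          (by positivity : (0:ℝ) ≤ (n:ℝ)^2)
        calc (n:ℝ)^3 = (n:ℝ)^2*(n:ℝ) := by ring
          _ ≤ (n:ℝ)^2*((n:ℝ)+1) := h6
      exact div_le_div_of_nonneg_left (abs_nonneg b) (by positivity) hns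
    rw [hsplit]
    calc |(sf a n - 1)*(rh a n - 1) + (rh a n - 1 + b/(n:ℝ)^2)
          + b*(1/(n:ℝ) - 1/((n:ℝ)+1) - 1/(n:ℝ)^2)|
        ≤ |(sf a n - 1)*(rh a n - 1)| + |rh a n - 1 + b/(n:ℝ)^2|
          + |b*(1/(n:ℝ) - 1/((n:ℝ)+1) - 1/(n:ℝ)^2)| := by
          refine le_trans (abs_add_le _ _) ?_
          exact add_le_add_left (abs_add_le _ _) _
      _ ≤ (|b| + 2*K₂)*K/(n:ℝ)^3 + K/(n:ℝ)^3 + |b|/(n:ℝ)^3 :=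
          add_le_add (add_le_add hterm1 hr1) hterm3
      _ = K₃/(n:ℝ)^3 := by rw [hK₃def]; ring
  -- round 2 telescope: |v m| ≤ 4 K₃ / m²
  have hv2 : ∀ m : ℕ, N₃ ≤ m → |v m| ≤ 4*K₃/(m:ℝ)^2 := by
    have hF2 : ∀ k, N₃ ≤ k → 0 ≤ K₃/((k:ℝ)-1)^2 := by
      intro k hk
      exact div_nonneg hK₃0 (sq_nonneg _)
    have hd2 : ∀ k, N₃ ≤ k → |v (k+1) - v k| ≤ K₃/((k:ℝ)-1)^2 - K₃/(((k+1:ℕ):ℝ)-1)^2 := by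
      intro k hk
      obtain ⟨h2, hp, _⟩ := hbasic k hk
      refine le_trans (hdv2 k hk) ?_
      push_cast
      have h8 := aux3 h2
      have h7 : K₃ * (1/(k:ℝ)^3) ≤ K₃ * (1/((k:ℝ)-1)^2 - 1/(k:ℝ)^2) :=
        mul_le_mul_of_nonneg_left h8 hK₃0
      calc K₃/(k:ℝ)^3 = K₃ * (1/(k:ℝ)^3) := by ring
        _ ≤ K₃ * (1/((k:ℝ)-1)^2 - 1/(k:ℝ)^2) := h7
        _ = K₃/((k:ℝ)-1)^2 - K₃/((k:ℝ)+1-1)^2 := by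
            rw [show (k:ℝ)+1-1 = (k:ℝ) by ring]
            ring
    have htb := telescope_bound (v := v) (F := fun k => K₃/((k:ℝ)-1)^2) hv0 hF2 hd2
    intro m hm
    obtain ⟨h2, hp, _⟩ := hbasic m hm
    refine le_trans (htb m hm) ?_
    have h9 := aux4b h2
    calc K₃/((m:ℝ)-1)^2 = K₃ * (1/((m:ℝ)-1)^2) := by ring
      _ ≤ K₃ * (4/(m:ℝ)^2) := mul_le_mul_of_nonneg_left h9 hK₃0
      _ = 4*K₃/(m:ℝ)^2 := by ring
  -- final conversion
  refine ⟨4*K₃+1, N₃, by positivity, ?_⟩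
  intro n hn
  obtain ⟨h2, hp, _⟩ := hbasic n hn
  have hP : (0:ℝ) < (n:ℝ)^(2*a-2) := Real.rpow_pos_of_pos hp _
  have hfg2 : (fg a n)^2 = sf a n * (n:ℝ)^(2*a-2) := by
    unfold sf
    rw [mul_assoc, ← Real.rpow_add hp]
    norm_num
  have h3 : (n:ℝ)^(2*a-3) = (n:ℝ)^(2*a-2)/(n:ℝ) := by
    rw [show 2*a-3 = (2*a-2) - 1 by ring, Real.rpow_sub hp, Real.rpow_one]
  have h4 : (n:ℝ)^(2*a-4) = (n:ℝ)^(2*a-2)/(n:ℝ)^2 := by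
    rw [show 2*a-4 = (2*a-2) - ((2:ℕ):ℝ) by push_cast; ring, Real.rpow_sub hp,
      Real.rpow_natCast]
  rw [hfg2, h3, h4]
  have hid : sf a n * (n:ℝ)^(2*a-2) - (n:ℝ)^(2*a-2) - b*((n:ℝ)^(2*a-2)/(n:ℝ))
      = (n:ℝ)^(2*a-2) * (sf a n - 1 - b/(n:ℝ)) := by ring
  rw [hid, abs_mul, abs_of_pos hP]
  have hvn : |sf a n - 1 - b/(n:ℝ)| ≤ 4*K₃/(n:ℝ)^2 := hv2 n hn
  calc (n:ℝ)^(2*a-2) * |sf a n - 1 - b/(n:ℝ)|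
      ≤ (n:ℝ)^(2*a-2) * (4*K₃/(n:ℝ)^2) := mul_le_mul_of_nonneg_left hvn (le_of_lt hP)
    _ ≤ (4*K₃+1) * ((n:ℝ)^(2*a-2)/(n:ℝ)^2) := by
        rw [show (n:ℝ)^(2*a-2) * (4*K₃/(n:ℝ)^2) = (4*K₃) * ((n:ℝ)^(2*a-2)/(n:ℝ)^2) by ring]
        apply mul_le_mul_of_nonneg_right (by linarith) (by positivity)


end GegAux

theorem gegenbauer_at_one_asymptotic (lam : ℝ) (hlam : 0 < lam) :
    ∃ (C : ℝ) (N : ℕ), 0 < C ∧ ∀ n : ℕ, N ≤ n →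
      |Real.Gamma (2 * lam) ^ 2 * (gegenbauer lam n 1) ^ 2
        - (n : ℝ) ^ (4 * lam - 2) - 2 * lam * (2 * lam - 1) * (n : ℝ) ^ (4 * lam - 3)|
      ≤ C * (n : ℝ) ^ (4 * lam - 4) := by
  have ha : (0:ℝ) < 2*lam := by linarith
  obtain ⟨C, N, hC, h⟩ := GegAux.main_est ha
  refine ⟨C, N, hC, ?_⟩
  intro n hn
  have h1 := h n hn
  have hgeg : Real.Gamma (2*lam) ^ 2 * (gegenbauer lam n 1)^2 = (GegAux.fg (2*lam) n)^2 := by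
    rw [← mul_pow, GegAux.geg_one hlam n]
  rw [hgeg, show 4*lam - 2 = 2*(2*lam) - 2 by ring, show 4*lam - 3 = 2*(2*lam) - 3 by ring,
    show 4*lam - 4 = 2*(2*lam) - 4 by ring]
  exact h1
end
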